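/- arXiv:2512.05756 — 8 statements merged into one kernel-verified Lean document; each statement's English description precedes it below -/
import Mathlib

section
/- If p_{n,x} = (log n − log log n + x)/n for fixed real x, then p_{n,x}(1+p_{n,x})^{n-2} → e^x as n → ∞. -/
open Real Filter

private noncomputable def Lfun (x : ℝ) (n : ℕ) : ℝ := Real.log n - Real.log (Real.log n) + x
private noncomputable def pfun (x : ℝ) (n : ℕ) : ℝ := Lfun x n / n

private lemma key_limits (x : ℝ) :
    Tendsto (fun n : ℕ => Lfun x n / Real.log n) atTop (nhds 1) ∧
    Tendsto (fun n : ℕ => pfun x n) atTop (nhds 0) ∧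
    Tendsto (fun n : ℕ => (Lfun x n) ^ 2 / n) atTop (nhds 0) := by
  have hn : Tendsto (fun n : ℕ => (n : ℝ)) atTop atTop := tendsto_natCast_atTop_atTop
  have hlog : Tendsto (fun n : ℕ => Real.log n) atTop atTop := Real.tendsto_log_atTop.comp hn
  have hldiv : Tendsto (fun y : ℝ => Real.log y / y) atTop (nhds 0) := by
    simpa using Real.tendsto_pow_log_div_mul_add_atTop 1 0 1 one_ne_zero
  have hldiv2 : Tendsto (fun y : ℝ => (Real.log y) ^ 2 / y) atTop (nhds 0) := by
    simpa using Real.tendsto_pow_log_div_mul_add_atTop 1 0 2 one_ne_zero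
  have hll : Tendsto (fun n : ℕ => Real.log (Real.log n) / Real.log n) atTop (nhds 0) :=
    hldiv.comp hlog
  have hxl : Tendsto (fun n : ℕ => x / Real.log n) atTop (nhds 0) :=
    tendsto_const_nhds.div_atTop hlog
  have hratio : Tendsto (fun n : ℕ => Lfun x n / Real.log n) atTop (nhds 1) := by
    have h := ((tendsto_const_nhds (α := ℕ) (f := atTop) (x := (1 : ℝ))).sub hll).add hxl
    rw [show (1 : ℝ) - 0 + 0 = 1 by ring] at h
    apply h.congr'
    filter_upwards [hlog.eventually_gt_atTop 0] with n hl
    have hne : Real.log n ≠ 0 := ne_of_gt hl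
    simp only [Lfun]
    field_simp
  refine ⟨hratio, ?_, ?_⟩
  · have hlogn : Tendsto (fun n : ℕ => Real.log n / n) atTop (nhds 0) := hldiv.comp hn
    have h := hratio.mul hlogn
    rw [mul_zero] at h
    apply h.congr'
    filter_upwards [hlog.eventually_gt_atTop 0, hn.eventually_gt_atTop 0] with n hl hnn
    have hne : Real.log n ≠ 0 := ne_of_gt hl
    have hne' : (n : ℝ) ≠ 0 := ne_of_gt hnn
    simp only [pfun]
    field_simp
  · have hlogn2 : Tendsto (fun n : ℕ => (Real.log n) ^ 2 / n) atTop (nhds 0) := hldiv2.comp hn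
    have h := (hratio.pow 2).mul hlogn2
    rw [one_pow, mul_zero] at h
    apply h.congr'
    filter_upwards [hlog.eventually_gt_atTop 0, hn.eventually_gt_atTop 0] with n hl hnn
    have hne : Real.log n ≠ 0 := ne_of_gt hl
    have hne' : (n : ℝ) ≠ 0 := ne_of_gt hnn
    field_simp

/-- At the critical scaling `p_{n,x} = (log n − log log n + x)/n`, the expected number of
monotone paths `p (1+p)^{n-2}` converges to `e^x`. -/
theorem expected_paths_tendsto_exp (x : ℝ) :
    Tendsto (fun n : ℕ =>
        ((Real.log n - Real.log (Real.log n) + x) / n) *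
          (1 + (Real.log n - Real.log (Real.log n) + x) / n) ^ (n - 2))
      atTop (nhds (Real.exp x)) := by
  obtain ⟨hratio, hp0, hL2⟩ := key_limits x
  have hn : Tendsto (fun n : ℕ => (n : ℝ)) atTop atTop := tendsto_natCast_atTop_atTop
  have hlog : Tendsto (fun n : ℕ => Real.log n) atTop atTop := Real.tendsto_log_atTop.comp hn
  -- eventual positivity facts
  have hLpos : ∀ᶠ n : ℕ in atTop, 0 < Lfun x n := by
    filter_upwards [hratio.eventually (eventually_gt_nhds (by norm_num : (1/2 : ℝ) < 1)),
      hlog.eventually_gt_atTop 0] with n hr hl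
    have := (lt_div_iff₀ hl).mp hr
    nlinarith
  have hppos : ∀ᶠ n : ℕ in atTop, 0 < pfun x n := by
    filter_upwards [hLpos, hn.eventually_gt_atTop 0] with n hL hnn
    exact div_pos hL hnn
  -- log(1 + p) → 0
  have h1p : Tendsto (fun n : ℕ => 1 + pfun x n) atTop (nhds 1) := by
    simpa using (tendsto_const_nhds (α := ℕ) (f := atTop) (x := (1 : ℝ))).add hp0
  have hlog1p : Tendsto (fun n : ℕ => Real.log (1 + pfun x n)) atTop (nhds 0) := by
    have := ((Real.continuousAt_log one_ne_zero).tendsto).comp h1p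
    simpa [Function.comp_def] using this
  -- middle term : n * (p - log(1+p)) → 0 by squeeze
  have hmid : Tendsto (fun n : ℕ => (n : ℝ) * (pfun x n - Real.log (1 + pfun x n)))
      atTop (nhds 0) := by
    apply tendsto_of_tendsto_of_tendsto_of_le_of_le' tendsto_const_nhds hL2
    · filter_upwards [hppos, hn.eventually_gt_atTop 0] with n hp hnn
      have h1 : Real.log (1 + pfun x n) ≤ pfun x n := by
        have := Real.log_le_sub_one_of_pos (x := 1 + pfun x n) (by linarith)
        linarith
      have := mul_nonneg (le_of_lt hnn) (by linarith : (0:ℝ) ≤ pfun x n - Real.log (1 + pfun x n))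
      linarith
    · filter_upwards [hppos, hn.eventually_gt_atTop 0] with n hp hnn
      have hne' : (n : ℝ) ≠ 0 := ne_of_gt hnn
      have h2 : 1 - (1 + pfun x n)⁻¹ ≤ Real.log (1 + pfun x n) :=
        Real.one_sub_inv_le_log_of_pos (by linarith)
      have h3 : pfun x n - Real.log (1 + pfun x n) ≤ (pfun x n) ^ 2 := by
        have h1pp : (0:ℝ) < 1 + pfun x n := by linarith
        have hinv : 1 - (1 + pfun x n)⁻¹ = pfun x n / (1 + pfun x n) := by
          field_simp
          ring
        rw [hinv] at h2
        have hdiv : pfun x n / (1 + pfun x n) ≥ pfun x n - (pfun x n) ^ 2 := by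
          rw [ge_iff_le, le_div_iff₀ h1pp]
          nlinarith
        linarith
      have h4 : (n : ℝ) * (pfun x n) ^ 2 = (Lfun x n) ^ 2 / n := by
        simp only [pfun]; field_simp
      calc (n : ℝ) * (pfun x n - Real.log (1 + pfun x n)) ≤ (n : ℝ) * (pfun x n) ^ 2 :=
            mul_le_mul_of_nonneg_left h3 (le_of_lt hnn)
        _ = (Lfun x n) ^ 2 / n := h4
  -- log of the ratio → 0
  have hlogratio : Tendsto (fun n : ℕ => Real.log (Lfun x n / Real.log n)) atTop (nhds 0) := by
    have := ((Real.continuousAt_log one_ne_zero).tendsto).comp hratio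
    simpa [Function.comp_def] using this
  -- the exponent tends to x
  have hexp : Tendsto (fun n : ℕ => x + (Real.log (Lfun x n / Real.log n)
      - (n : ℝ) * (pfun x n - Real.log (1 + pfun x n)) - 2 * Real.log (1 + pfun x n)))
      atTop (nhds x) := by
    have h := (hlogratio.sub hmid).sub (hlog1p.const_mul 2)
    rw [show (0:ℝ) - 0 - 2 * 0 = 0 by ring] at h
    have := (tendsto_const_nhds (α := ℕ) (f := atTop) (x := x)).add h
    simpa using this
  -- compose with exp
  have hfinal := (Real.continuous_exp.tendsto x).comp hexp
  apply hfinal.congr'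
  filter_upwards [hLpos, hppos, hlog.eventually_gt_atTop 0, eventually_ge_atTop 2] with n hL hp hl h2
  have hnn : (0:ℝ) < n := by
    have : (2:ℝ) ≤ n := by exact_mod_cast h2
    linarith
  have hne : Real.log n ≠ 0 := ne_of_gt hl
  have hne' : (n : ℝ) ≠ 0 := ne_of_gt hnn
  have h1pp : (0:ℝ) < 1 + pfun x n := by linarith
  have hnp : (n : ℝ) * pfun x n = Lfun x n := by
    simp only [pfun]; field_simp
  have hpow : (1 + pfun x n) ^ (n - 2) = Real.exp (((n - 2 : ℕ) : ℝ) * Real.log (1 + pfun x n)) := by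
    rw [← Real.log_pow, Real.exp_log (pow_pos h1pp _)]
  have hcast : ((n - 2 : ℕ) : ℝ) = (n : ℝ) - 2 := by
    rw [Nat.cast_sub h2]; norm_num
  have hlogp : Real.log (pfun x n) = Real.log (Lfun x n) - Real.log n := by
    simp only [pfun]
    rw [Real.log_div (ne_of_gt hL) hne']
  have hlogr : Real.log (Lfun x n / Real.log n) = Real.log (Lfun x n) - Real.log (Real.log n) :=
    Real.log_div (ne_of_gt hL) hne
  have hnp' : (n : ℝ) * pfun x n = Real.log n - Real.log (Real.log n) + x := hnp
  have hkey : x + (Real.log (Lfun x n / Real.log n)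
      - (n : ℝ) * (pfun x n - Real.log (1 + pfun x n)) - 2 * Real.log (1 + pfun x n))
      = Real.log (pfun x n) + ((n : ℝ) - 2) * Real.log (1 + pfun x n) := by
    rw [hlogp, hlogr]
    linear_combination -hnp'
  show Real.exp (x + (Real.log (Lfun x n / Real.log n)
      - (n : ℝ) * (pfun x n - Real.log (1 + pfun x n)) - 2 * Real.log (1 + pfun x n)))
      = pfun x n * (1 + pfun x n) ^ (n - 2)
  rw [hpow, hcast, hkey, Real.exp_add, Real.exp_log hp]
end

section
/- The successive gap lengths between consecutive vertices reachable from 1 in G_p are independent, and the i-th gap is geometrically distributed with success parameter 1 − (1−p)^i: the probability that the first l gaps have sizes k_1,...,k_l ≥ 0 equals ∏_{i=1}^l ((1−p)^i)^{k_i} (1 − (1−p)^i). -/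
open Real MeasureTheory ProbabilityTheory

/-- `reachSet E k` is the event that there is a monotone path `1 = i₁ < ⋯ < iₘ = k`
along present edges (`E i j` is the event that the edge `(i,j)` is present). -/
def reachSet {Ω : Type*} (E : ℕ → ℕ → Set Ω) (k : ℕ) : Set Ω :=
  {ω | ∃ (m : ℕ) (f : Fin (m + 1) → ℕ), StrictMono f ∧ f 0 = 1 ∧ f (Fin.last m) = k ∧
    ∀ j : Fin m, ω ∈ E (f j.castSucc) (f j.succ)}

/-- `reachPos E i ω` is the position of the `i`-th vertex reachable from `1` by a monotone
path (with `reachPos E 0 ω = 0` by convention, so that `reachPos E 1 ω = 1`). -/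
noncomputable def reachPos {Ω : Type*} (E : ℕ → ℕ → Set Ω) : ℕ → Ω → ℕ
  | 0 => fun _ => 0
  | (i + 1) => fun ω => sInf {k | reachPos E i ω < k ∧ ω ∈ reachSet E k}

/-- `gap E i ω` is the number of non-reachable vertices strictly between the `i`-th and the
`(i+1)`-th vertices reachable from `1`. -/
noncomputable def gap {Ω : Type*} (E : ℕ → ℕ → Set Ω) (i : ℕ) (ω : Ω) : ℕ :=
  reachPos E (i + 1) ω - reachPos E i ω - 1

lemma reach_one {Ω : Type*} (E : ℕ → ℕ → Set Ω) (ω : Ω) : ω ∈ reachSet E 1 :=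
  ⟨0, fun _ => 1, fun a b h => absurd (Fin.lt_def.mp h) (by have := a.isLt; have := b.isLt; omega), rfl, rfl, fun j => j.elim0⟩

lemma reach_ge_one {Ω : Type*} {E : ℕ → ℕ → Set Ω} {ω : Ω} {v : ℕ}
    (h : ω ∈ reachSet E v) : 1 ≤ v := by
  obtain ⟨m, f, hf, h0, hl, _⟩ := h
  have := hf.monotone (Fin.zero_le (Fin.last m))
  omega

lemma reach_step {Ω : Type*} {E : ℕ → ℕ → Set Ω} {ω : Ω} {u v : ℕ} (h : ω ∈ reachSet E u)
    (huv : u < v) (he : ω ∈ E u v) : ω ∈ reachSet E v := by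
  obtain ⟨m, f, hf, h0, hl, hedge⟩ := h
  refine ⟨m + 1, Fin.snoc f v, ?_, ?_, ?_, ?_⟩
  · intro a b hab
    rcases Fin.eq_castSucc_or_eq_last b with ⟨b', rfl⟩ | rfl
    · rcases Fin.eq_castSucc_or_eq_last a with ⟨a', rfl⟩ | rfl
      · simp only [Fin.snoc_castSucc]
        exact hf (by simpa using hab)
      · exact absurd hab (Fin.castSucc_lt_last b').asymm
    · rcases Fin.eq_castSucc_or_eq_last a with ⟨a', rfl⟩ | rfl
      · simp only [Fin.snoc_castSucc, Fin.snoc_last]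
        calc f a' ≤ f (Fin.last m) := hf.monotone (Fin.le_last _)
        _ = u := hl
        _ < v := huv
      · exact absurd hab (lt_irrefl _)
  · rw [show (0 : Fin (m+2)) = Fin.castSucc 0 by simp, Fin.snoc_castSucc]
    exact h0
  · simp
  · intro j
    rcases Fin.eq_castSucc_or_eq_last j with ⟨j', rfl⟩ | rfl
    · rw [show (Fin.castSucc j').castSucc = (j'.castSucc).castSucc from rfl,
        Fin.snoc_castSucc, show (Fin.castSucc j').succ = (j'.succ).castSucc from (Fin.succ_castSucc j').symm, Fin.snoc_castSucc]
      exact hedge j'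
    · rw [show (Fin.last m).succ = Fin.last (m+1) from Fin.succ_last m, Fin.snoc_last, Fin.snoc_castSucc, hl]
      exact he

lemma reach_last {Ω : Type*} {E : ℕ → ℕ → Set Ω} {ω : Ω} {v : ℕ} (h : ω ∈ reachSet E v)
    (hv : v ≠ 1) : ∃ u, u < v ∧ ω ∈ reachSet E u ∧ ω ∈ E u v := by
  obtain ⟨m, f, hf, h0, hl, hedge⟩ := h
  match m with
  | 0 => exact absurd (h0.symm.trans hl) hv.symm
  | (m'+1) =>
    refine ⟨f (Fin.last m').castSucc, ?_, ⟨m', f ∘ Fin.castSucc, hf.comp Fin.strictMono_castSucc, ?_, rfl, ?_⟩, ?_⟩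
    · rw [← hl]; exact hf (Fin.castSucc_lt_last _)
    · simpa using h0
    · intro j
      have := hedge j.castSucc
      rw [Fin.succ_castSucc] at this
      exact this
    · have := hedge (Fin.last m')
      rwa [Fin.succ_last, hl] at this

def spos (k : ℕ → ℕ) : ℕ → ℕ
  | 0 => 0
  | 1 => 1
  | (i+2) => spos k (i+1) + k (i+1) + 1

lemma spos_one (k : ℕ → ℕ) : spos k 1 = 1 := rfl

lemma spos_succ (k : ℕ → ℕ) {i : ℕ} (hi : 1 ≤ i) : spos k (i+1) = spos k i + k i + 1 := by
  match i, hi with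
  | (i'+1), _ => rfl

lemma spos_mono (k : ℕ → ℕ) : StrictMono (spos k) := by
  apply strictMono_nat_of_lt_succ
  intro n
  match n with
  | 0 => simp [spos]
  | (n+1) => have := spos_succ k (show (1:ℕ) ≤ n+1 by omega); omega

lemma spos_pos (k : ℕ → ℕ) {i : ℕ} (hi : 1 ≤ i) : 1 ≤ spos k i := by
  have := (spos_mono k).monotone hi
  rwa [spos_one] at this

lemma spos_trichotomy (k : ℕ → ℕ) (m : ℕ) : ∀ v, 1 ≤ v → v ≤ spos k (m+1) →
    (∃ i, 1 ≤ i ∧ i ≤ m+1 ∧ v = spos k i) ∨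
    (∃ i, 1 ≤ i ∧ i ≤ m ∧ spos k i < v ∧ v < spos k (i+1)) := by
  induction m with
  | zero =>
    intro v h1 h2
    rw [spos_one] at h2
    exact Or.inl ⟨1, le_refl _, le_refl _, by rw [spos_one]; omega⟩
  | succ m ih =>
    intro v h1 h2
    by_cases hv : v ≤ spos k (m+1)
    · rcases ih v h1 hv with ⟨i, hi1, hi2, hi3⟩ | ⟨i, hi1, hi2, hi3, hi4⟩
      · exact Or.inl ⟨i, hi1, by omega, hi3⟩
      · exact Or.inr ⟨i, hi1, by omega, hi3, hi4⟩
    · push_neg at hv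
      by_cases hv2 : v = spos k (m+1+1)
      · exact Or.inl ⟨m+1+1, by omega, by omega, hv2⟩
      · exact Or.inr ⟨m+1, by omega, by omega, hv, by omega⟩

lemma reachPos_succ {Ω : Type*} (E : ℕ → ℕ → Set Ω) (i : ℕ) (ω : Ω) :
    reachPos E (i+1) ω = sInf {x | reachPos E i ω < x ∧ ω ∈ reachSet E x} := rfl

lemma reachPos_one {Ω : Type*} (E : ℕ → ℕ → Set Ω) (ω : Ω) : reachPos E 1 ω = 1 := by
  have h1 : (1:ℕ) ∈ {x | reachPos E 0 ω < x ∧ ω ∈ reachSet E x} :=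
    ⟨Nat.one_pos, reach_one E ω⟩
  rw [reachPos_succ]
  exact le_antisymm (Nat.sInf_le h1) (Nat.sInf_mem ⟨1, h1⟩).1

lemma lemB {Ω : Type*} {E : ℕ → ℕ → Set Ω} {ω : Ω} (k : ℕ → ℕ) (l : ℕ) :
    (∀ i, 1 ≤ i → i ≤ l+1 → reachPos E i ω = spos k i) ↔
    (∀ v, 1 ≤ v → v ≤ spos k (l+1) →
      (ω ∈ reachSet E v ↔ ∃ i, 1 ≤ i ∧ i ≤ l+1 ∧ v = spos k i)) := by
  constructor
  · intro hT' v hv1 hv2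
    constructor
    · intro hreach
      have key : ∀ i, 1 ≤ i → i ≤ l+1 → v ≤ spos k i → ∃ m, 1 ≤ m ∧ m ≤ i ∧ v = spos k m := by
        intro i hi1
        induction i, hi1 using Nat.le_induction with
        | base =>
          intro _ hle
          rw [spos_one] at hle
          exact ⟨1, le_refl _, le_refl _, by rw [spos_one]; omega⟩
        | succ i hi ih =>
          intro hle hvle
          by_cases hc : v ≤ spos k i
          · obtain ⟨m, hm1, hm2, hm3⟩ := ih (by omega) hc
            exact ⟨m, hm1, by omega, hm3⟩
          · push_neg at hc
            have hri := hT' i hi (by omega)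
            have hrs := hT' (i+1) (by omega) hle
            have hv_mem : v ∈ {x | reachPos E i ω < x ∧ ω ∈ reachSet E x} := by
              constructor
              · rw [hri]; exact hc
              · exact hreach
            have := Nat.sInf_le hv_mem
            rw [← reachPos_succ, hrs] at this
            exact ⟨i+1, by omega, le_refl _, by omega⟩
      exact key (l+1) (by omega) (le_refl _) hv2
    · rintro ⟨i, hi1, hi2, rfl⟩
      have h := hT' i hi1 hi2
      match i, hi1, h with
      | (i'+1), hi1, h =>
        rw [reachPos_succ] at h
        have hpos := spos_pos k (show (1:ℕ) ≤ i'+1 by omega)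
        have hne : Set.Nonempty {x | reachPos E i' ω < x ∧ ω ∈ reachSet E x} := by
          by_contra hemp
          rw [Set.not_nonempty_iff_eq_empty] at hemp
          rw [hemp, Nat.sInf_empty] at h
          omega
        have := (Nat.sInf_mem hne).2
        rwa [h] at this
  · intro hP i hi1
    induction i, hi1 using Nat.le_induction with
    | base => intro _; rw [reachPos_one, spos_one]
    | succ i hi ih =>
      intro hle
      have hri := ih (by omega)
      rw [reachPos_succ, hri]
      have hmem : spos k (i+1) ∈ {x | spos k i < x ∧ ω ∈ reachSet E x} := by
        constructor
        · exact spos_mono k (by omega)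
        · exact (hP (spos k (i+1)) (spos_pos k (by omega))
            ((spos_mono k).monotone hle)).2 ⟨i+1, by omega, hle, rfl⟩
      have hlb : ∀ x ∈ {x | spos k i < x ∧ ω ∈ reachSet E x}, spos k (i+1) ≤ x := by
        rintro x ⟨hx1, hx2⟩
        by_contra hcon
        push_neg at hcon
        have hx0 : 1 ≤ x := by have := spos_pos k hi; omega
        have hxle : x ≤ spos k (l+1) :=
          le_of_lt (lt_of_lt_of_le hcon ((spos_mono k).monotone hle))
        obtain ⟨m, hm1, hm2, rfl⟩ := (hP x hx0 hxle).1 hx2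
        have h1 : i < m := (spos_mono k).lt_iff_lt.mp hx1
        have h2 : m < i+1 := (spos_mono k).lt_iff_lt.mp hcon
        omega
      exact le_antisymm (Nat.sInf_le hmem) (hlb _ (Nat.sInf_mem ⟨_, hmem⟩))

lemma lemA {Ω : Type*} {E : ℕ → ℕ → Set Ω} {ω : Ω} (k : ℕ → ℕ) (l : ℕ)
    (hinf : ∀ n, ∃ v, n < v ∧ ω ∈ reachSet E v) :
    (∀ i ∈ Finset.Icc 1 l, gap E i ω = k i) ↔
    (∀ i, 1 ≤ i → i ≤ l+1 → reachPos E i ω = spos k i) := by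
  have hstep : ∀ i, reachPos E i ω < reachPos E (i+1) ω := by
    intro i
    obtain ⟨v, hv1, hv2⟩ := hinf (reachPos E i ω)
    have hne : Set.Nonempty {x | reachPos E i ω < x ∧ ω ∈ reachSet E x} := ⟨v, hv1, hv2⟩
    rw [reachPos_succ]
    exact (Nat.sInf_mem hne).1
  constructor
  · intro hT i hi1
    induction i, hi1 using Nat.le_induction with
    | base => intro _; rw [reachPos_one, spos_one]
    | succ i hi ih =>
      intro hle
      have hri := ih (by omega)
      have hg := hT i (Finset.mem_Icc.mpr ⟨hi, by omega⟩)
      have hs := hstep i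
      simp only [gap] at hg
      rw [spos_succ k hi]
      omega
  · intro hT' i hi
    rw [Finset.mem_Icc] at hi
    simp only [gap]
    rw [hT' i hi.1 (by omega), hT' (i+1) (by omega) (by omega), spos_succ k hi.1]
    omega

lemma lemC {Ω : Type*} {E : ℕ → ℕ → Set Ω} {ω : Ω} (k : ℕ → ℕ) (l : ℕ) :
    ((∀ i, 1 ≤ i → i ≤ l → ∀ v, spos k i < v → v < spos k (i+1) →
        ∀ j, 1 ≤ j → j ≤ i → ω ∉ E (spos k j) v) ∧
      (∀ t, t < l → ∃ j, 1 ≤ j ∧ j ≤ t+1 ∧ ω ∈ E (spos k j) (spos k (t+2)))) ↔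
    (∀ v, 1 ≤ v → v ≤ spos k (l+1) →
      (ω ∈ reachSet E v ↔ ∃ i, 1 ≤ i ∧ i ≤ l+1 ∧ v = spos k i)) := by
  constructor
  · rintro ⟨hA, hU⟩ v
    induction v using Nat.strong_induction_on with
    | _ v ih =>
      intro hv1 hv2
      rcases spos_trichotomy k l v hv1 hv2 with ⟨i, hi1, hi2, rfl⟩ | ⟨i, hi1, hi2, hlt1, hlt2⟩
      · constructor
        · intro _; exact ⟨i, hi1, hi2, rfl⟩
        · intro _
          rcases i with _ | _ | t
          · omega
          · rw [spos_one]; exact reach_one E ω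
          · obtain ⟨j, hj1, hj2, hedge⟩ := hU t (by omega)
            have hjlt : spos k j < spos k (t+2) := spos_mono k (by omega)
            have hreachj : ω ∈ reachSet E (spos k j) :=
              (ih (spos k j) (by
                  have : spos k (t+2) ≤ spos k (t+1+1) := le_refl _
                  omega)
                (spos_pos k hj1)
                (le_trans hjlt.le ((spos_mono k).monotone (show t+2 ≤ l+1 by omega)))).2
                ⟨j, hj1, by omega, rfl⟩
            exact reach_step hreachj hjlt hedge
      · constructor
        · intro hreach
          exfalso
          have hvne : v ≠ 1 := by have := spos_pos k hi1; omega
          obtain ⟨u, hu1, hu2, hu3⟩ := reach_last hreach hvne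
          have hu0 : 1 ≤ u := reach_ge_one hu2
          have hule : u ≤ spos k (l+1) := by
            have : spos k (i+1) ≤ spos k (l+1) := (spos_mono k).monotone (by omega)
            omega
          obtain ⟨m, hm1, hm2, rfl⟩ := (ih u hu1 hu0 hule).1 hu2
          have hmi : m ≤ i := by
            by_contra hmi
            push_neg at hmi
            have := (spos_mono k).monotone (show i+1 ≤ m by omega)
            omega
          exact hA i hi1 hi2 v hlt1 hlt2 m hm1 hmi hu3
        · rintro ⟨m, hm1, hm2, rfl⟩
          rcases lt_or_ge m (i+1) with h | h
          · have := (spos_mono k).monotone (show m ≤ i by omega); omega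
          · have := (spos_mono k).monotone h; omega
  · intro hP
    constructor
    · intro i hi1 hi2 v hv1 hv2 j hj1 hj2 hedge
      have hsj : ω ∈ reachSet E (spos k j) :=
        (hP (spos k j) (spos_pos k hj1) ((spos_mono k).monotone (by omega))).2
          ⟨j, hj1, by omega, rfl⟩
      have hjv : spos k j < v := by
        have := (spos_mono k).monotone hj2; omega
      have hv : ω ∈ reachSet E v := reach_step hsj hjv hedge
      have hvle : v ≤ spos k (l+1) := by
        have := (spos_mono k).monotone (show i+1 ≤ l+1 by omega); omega
      obtain ⟨m, hm1, hm2, hm3⟩ := (hP v (by have := spos_pos k hi1; omega) hvle).1 hv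
      subst hm3
      rcases lt_or_ge m (i+1) with h | h
      · have := (spos_mono k).monotone (show m ≤ i by omega); omega
      · have := (spos_mono k).monotone h; omega
    · intro t ht
      have hreach : ω ∈ reachSet E (spos k (t+2)) :=
        (hP (spos k (t+2)) (spos_pos k (by omega))
          ((spos_mono k).monotone (by omega))).2 ⟨t+2, by omega, by omega, rfl⟩
      have hne1 : spos k (t+2) ≠ 1 := by
        have := spos_mono k (show 1 < t+2 by omega)
        rw [spos_one] at this; omega
      obtain ⟨u, hu1, hu2, hu3⟩ := reach_last hreach hne1
      have hu0 : 1 ≤ u := reach_ge_one hu2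
      have hule : u ≤ spos k (l+1) :=
        le_trans hu1.le ((spos_mono k).monotone (by omega))
      obtain ⟨m, hm1, hm2, rfl⟩ := (hP u hu0 hule).1 hu2
      have hmt : m ≤ t+1 := by
        by_contra h
        push_neg at h
        have := (spos_mono k).monotone (show t+2 ≤ m by omega); omega
      exact ⟨m, hm1, hmt, hu3⟩

lemma compl_biInter_meas {Ω : Type*} [MeasurableSpace Ω] {μ : Measure Ω}
    {ι : Type*} {F : ι → Set Ω} (h_indep : iIndepSet F μ)
    {q : ENNReal} (hq : ∀ e, μ (F e)ᶜ = q) (A : Finset ι) :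
    μ (⋂ e ∈ A, (F e)ᶜ) = q ^ A.card := by
  rw [(iIndepSet_iff F μ).1 h_indep A
    (fun i _ => (MeasurableSpace.measurableSet_generateFrom (Set.mem_singleton _)).compl)]
  simp [hq, Finset.prod_const]

lemma master_meas {Ω : Type*} [MeasurableSpace Ω] (μ : Measure Ω) [IsProbabilityMeasure μ]
    {ι : Type*} {F : ι → Set Ω}
    (h_indep : iIndepSet F μ) (hmeas : ∀ e, MeasurableSet (F e))
    {p : ℝ} (hp0 : 0 ≤ p) (hp1 : p ≤ 1)
    (hq : ∀ e, μ (F e) = ENNReal.ofReal p)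
    (n : ℕ) (A : Finset ι) (U : ℕ → Finset ι)
    (hAU : ∀ t, t < n → Disjoint A (U t))
    (hUU : ∀ t₁, t₁ < n → ∀ t₂, t₂ < n → t₁ ≠ t₂ → Disjoint (U t₁) (U t₂)) :
    μ ((⋂ e ∈ A, (F e)ᶜ) ∩ ⋂ t ∈ Finset.range n, (⋂ e ∈ U t, (F e)ᶜ)ᶜ)
      = ENNReal.ofReal ((1-p)^A.card * ∏ t ∈ Finset.range n, (1 - (1-p)^(U t).card)) := by
  classical
  have h1p0 : 0 ≤ 1 - p := by linarith
  have h1p1 : 1 - p ≤ 1 := by linarith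
  have hcompl : ∀ e, μ (F e)ᶜ = ENNReal.ofReal (1-p) := by
    intro e
    rw [prob_compl_eq_one_sub (hmeas e), hq e, ← ENNReal.ofReal_one,
      ← ENNReal.ofReal_sub _ hp0]
  have hbase : ∀ B : Finset ι, μ (⋂ e ∈ B, (F e)ᶜ) = ENNReal.ofReal ((1-p)^B.card) := by
    intro B
    rw [compl_biInter_meas h_indep hcompl B, ← ENNReal.ofReal_pow h1p0]
  induction n generalizing A with
  | zero => simpa using hbase A
  | succ n ih =>
    have hXY : (⋂ t ∈ Finset.range (n+1), (⋂ e ∈ U t, (F e)ᶜ)ᶜ)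
        = (⋂ t ∈ Finset.range n, (⋂ e ∈ U t, (F e)ᶜ)ᶜ) ∩ (⋂ e ∈ U n, (F e)ᶜ)ᶜ := by
      rw [Finset.range_add_one, Finset.set_biInter_insert]
      exact Set.inter_comm _ _
    rw [hXY, ← Set.inter_assoc]
    set X := (⋂ e ∈ A, (F e)ᶜ) ∩ ⋂ t ∈ Finset.range n, (⋂ e ∈ U t, (F e)ᶜ)ᶜ with hXdef
    set Y := ⋂ e ∈ U n, (F e)ᶜ with hYdef
    have hXmeas : MeasurableSet X := by
      apply MeasurableSet.inter
      · exact MeasurableSet.biInter (Finset.countable_toSet A) fun e _ => (hmeas e).compl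
      · exact MeasurableSet.biInter (Finset.countable_toSet _) fun t _ =>
          (MeasurableSet.biInter (Finset.countable_toSet _) fun e _ => (hmeas e).compl).compl
    have hYmeas : MeasurableSet Y :=
      MeasurableSet.biInter (Finset.countable_toSet _) fun e _ => (hmeas e).compl
    have hdiff : X ∩ Yᶜ = X \ (X ∩ Y) := by
      rw [Set.diff_self_inter, Set.diff_eq]
    have hXY2 : X ∩ Y = (⋂ e ∈ A ∪ U n, (F e)ᶜ) ∩ ⋂ t ∈ Finset.range n, (⋂ e ∈ U t, (F e)ᶜ)ᶜ := by
      rw [Finset.set_biInter_inter]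
      rw [hXdef, hYdef]
      ext ω
      simp only [Set.mem_inter_iff, Set.mem_iInter]
      tauto
    have hμX : μ X = ENNReal.ofReal ((1-p)^A.card * ∏ t ∈ Finset.range n, (1 - (1-p)^(U t).card)) :=
      ih A (fun t ht => hAU t (by omega)) (fun t₁ h₁ t₂ h₂ hne => hUU t₁ (by omega) t₂ (by omega) hne)
    have hdisj : Disjoint A (U n) := hAU n (by omega)
    have hμXY : μ (X ∩ Y) = ENNReal.ofReal ((1-p)^(A.card + (U n).card)
        * ∏ t ∈ Finset.range n, (1 - (1-p)^(U t).card)) := by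
      rw [hXY2, ih (A ∪ U n)
        (fun t ht => Finset.disjoint_union_left.mpr
          ⟨hAU t (by omega), hUU n (by omega) t (by omega) (by omega)⟩)
        (fun t₁ h₁ t₂ h₂ hne => hUU t₁ (by omega) t₂ (by omega) hne),
        Finset.card_union_of_disjoint hdisj]
    have hprod_nonneg : 0 ≤ ∏ t ∈ Finset.range n, (1 - (1-p)^(U t).card) :=
      Finset.prod_nonneg fun t _ => by
        have := pow_le_one₀ h1p0 h1p1 (n := (U t).card); linarith
    rw [hdiff, measure_diff Set.inter_subset_left (hXmeas.inter hYmeas).nullMeasurableSet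
      (measure_ne_top μ _), hμX, hμXY, ← ENNReal.ofReal_sub _ (by positivity)]
    congr 1
    rw [Finset.prod_range_succ, pow_add]
    ring

lemma measure_D_zero {Ω : Type*} [MeasurableSpace Ω] (μ : Measure Ω) [IsProbabilityMeasure μ]
    (p : ℝ) (hp : p ∈ Set.Ioo (0:ℝ) 1)
    (E : ℕ → ℕ → Set Ω) (hEmeas : ∀ i j, MeasurableSet (E i j))
    (hEp : ∀ i j, i < j → μ (E i j) = ENNReal.ofReal p)
    (h_indep : iIndepSet (fun e : {x : ℕ × ℕ // x.1 < x.2} => E e.1.1 e.1.2) μ) :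
    μ {ω | ∃ n, ∀ v, n < v → ω ∉ reachSet E v} = 0 := by
  classical
  obtain ⟨hp0, hp1⟩ := hp
  have h1p0 : 0 ≤ 1 - p := by linarith
  have h1p1 : 1 - p < 1 := by linarith
  set F : {x : ℕ × ℕ // x.1 < x.2} → Set Ω := fun e => E e.1.1 e.1.2 with hF
  have hcompl : ∀ e, μ (F e)ᶜ = ENNReal.ofReal (1-p) := by
    intro e
    rw [prob_compl_eq_one_sub (hEmeas _ _), hEp _ _ e.2, ← ENNReal.ofReal_one,
      ← ENNReal.ofReal_sub _ hp0.le]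
  have hsub : {ω : Ω | ∃ n, ∀ v, n < v → ω ∉ reachSet E v}
      ⊆ ⋃ n : ℕ, {ω : Ω | ∀ v, n < v → ω ∉ reachSet E v} := by
    rintro ω ⟨n, hn⟩
    exact Set.mem_iUnion.mpr ⟨n, hn⟩
  refine le_antisymm (le_trans (measure_mono hsub) ?_) (zero_le)
  rw [measure_iUnion_null fun n => ?_]
  -- show each D_n is null
  set Dn := {ω : Ω | ∀ v, n < v → ω ∉ reachSet E v} with hDn
  have hbound : ∀ m : ℕ, μ Dn ≤ ENNReal.ofReal ((1-p)^m) := by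
    intro m
    set Fnm : Finset {x : ℕ × ℕ // x.1 < x.2} :=
      ((Finset.Ioc (n+1) (n+1+m)).image (fun v => ((1:ℕ), v))).subtype (fun x => x.1 < x.2)
      with hFnm
    have hsub2 : Dn ⊆ ⋂ e ∈ Fnm, (F e)ᶜ := by
      intro ω hω
      refine Set.mem_iInter₂.mpr fun e he => ?_
      obtain ⟨⟨a, b⟩, hab⟩ := e
      rw [Finset.mem_subtype] at he
      obtain ⟨v, hv, heq⟩ := Finset.mem_image.mp he
      rw [Finset.mem_Ioc] at hv
      injection heq with h1 h2
      subst h1; subst h2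
      intro hedge
      exact hω v (by omega) (reach_step (reach_one E ω) hab hedge)
    have hcard : Fnm.card = m := by
      rw [hFnm, Finset.card_subtype, Finset.filter_true_of_mem, Finset.card_image_of_injOn,
        Nat.card_Ioc]
      · omega
      · intro x _ y _ hxy
        simpa using hxy
      · intro x hx
        obtain ⟨v, hv, rfl⟩ := Finset.mem_image.mp hx
        rw [Finset.mem_Ioc] at hv
        simp only []
        omega
    calc μ Dn ≤ μ (⋂ e ∈ Fnm, (F e)ᶜ) := measure_mono hsub2
    _ = ENNReal.ofReal (1-p) ^ Fnm.card := compl_biInter_meas h_indep hcompl Fnm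
    _ = ENNReal.ofReal ((1-p)^m) := by rw [hcard, ← ENNReal.ofReal_pow h1p0]
  have htend : Filter.Tendsto (fun m : ℕ => ENNReal.ofReal ((1-p)^m)) Filter.atTop (nhds 0) := by
    have := ENNReal.tendsto_ofReal (tendsto_pow_atTop_nhds_zero_of_lt_one h1p0 h1p1)
    simpa using this
  exact le_antisymm (ge_of_tendsto htend (Filter.Eventually.of_forall hbound)) (zero_le)

/-- In the Barak–Erdős graph `G_p`, the successive gaps between consecutive reachable vertices
are independent geometric variables: the probability that the first `l` gaps have sizes
`k_1, …, k_l ≥ 0` equals `∏_{i=1}^l ((1−p)^i)^{k_i} (1 − (1−p)^i)`. -/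
theorem gaps_independent_geometric
    {Ω : Type*} [MeasurableSpace Ω] (μ : Measure Ω) [IsProbabilityMeasure μ]
    (p : ℝ) (hp : p ∈ Set.Ioo (0:ℝ) 1)
    (E : ℕ → ℕ → Set Ω) (hEmeas : ∀ i j, MeasurableSet (E i j))
    (hEp : ∀ i j, i < j → μ (E i j) = ENNReal.ofReal p)
    (h_indep : iIndepSet (fun e : {x : ℕ × ℕ // x.1 < x.2} => E e.1.1 e.1.2) μ)
    (l : ℕ) (hl : 1 ≤ l) (k : ℕ → ℕ) :
    μ {ω | ∀ i ∈ Finset.Icc 1 l, gap E i ω = k i}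
      = ∏ i ∈ Finset.Icc 1 l,
          ENNReal.ofReal (((1 - p) ^ i) ^ (k i) * (1 - (1 - p) ^ i)) := by
  classical
  obtain ⟨hp0, hp1⟩ := hp
  have h1p0 : (0:ℝ) ≤ 1 - p := by linarith
  have h1p1 : (1:ℝ) - p ≤ 1 := by linarith
  -- the edge finsets
  set A : Finset {x : ℕ × ℕ // x.1 < x.2} :=
    ((Finset.Icc 1 l).biUnion (fun i =>
      (Finset.Ioo (spos k i) (spos k (i+1))).biUnion (fun v =>
        (Finset.Icc 1 i).image (fun j => ((spos k j, v) : ℕ × ℕ))))).subtype (fun x => x.1 < x.2)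
    with hAdef
  set U : ℕ → Finset {x : ℕ × ℕ // x.1 < x.2} := fun t =>
    ((Finset.Icc 1 (t+1)).image (fun j => (spos k j, spos k (t+2)))).subtype (fun x => x.1 < x.2)
    with hUdef
  -- disjointness
  have hAU : ∀ t, t < l → Disjoint A (U t) := by
    intro t ht
    rw [Finset.disjoint_left]
    rintro ⟨⟨a, b⟩, hab⟩ hxA hxU
    rw [hAdef, Finset.mem_subtype] at hxA
    rw [hUdef, Finset.mem_subtype] at hxU
    obtain ⟨i, hi, h2⟩ := Finset.mem_biUnion.mp hxA
    obtain ⟨v, hv, h3⟩ := Finset.mem_biUnion.mp h2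
    obtain ⟨j, hj, heq⟩ := Finset.mem_image.mp h3
    obtain ⟨j', hj', heq'⟩ := Finset.mem_image.mp hxU
    injection heq with ha hb
    injection heq' with ha' hb'
    rw [Finset.mem_Icc] at hi
    rw [Finset.mem_Ioo] at hv
    rcases Nat.lt_or_ge (t+2) (i+1) with h | h
    · have := (spos_mono k).monotone (show t+2 ≤ i by omega); omega
    · have := (spos_mono k).monotone (show i+1 ≤ t+2 by omega); omega
  have hUU : ∀ t₁, t₁ < l → ∀ t₂, t₂ < l → t₁ ≠ t₂ → Disjoint (U t₁) (U t₂) := by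
    intro t₁ _ t₂ _ hne
    rw [Finset.disjoint_left]
    rintro ⟨⟨a, b⟩, hab⟩ hx1 hx2
    rw [hUdef, Finset.mem_subtype] at hx1 hx2
    obtain ⟨j, hj, heq⟩ := Finset.mem_image.mp hx1
    obtain ⟨j', hj', heq'⟩ := Finset.mem_image.mp hx2
    injection heq with ha hb
    injection heq' with ha' hb'
    have hs : spos k (t₁+2) = spos k (t₂+2) := by omega
    have := (spos_mono k).injective hs
    omega
  -- cardinalities
  have hUcard : ∀ t, (U t).card = t+1 := by
    intro t
    rw [hUdef]
    rw [Finset.card_subtype, Finset.filter_true_of_mem, Finset.card_image_of_injOn, Nat.card_Icc]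
    · omega
    · intro a _ b _ hab
      injection hab with h1 _
      exact (spos_mono k).injective h1
    · intro x hx
      obtain ⟨j, hj, rfl⟩ := Finset.mem_image.mp hx
      rw [Finset.mem_Icc] at hj
      exact spos_mono k (by omega)
  have hAcard : A.card = ∑ i ∈ Finset.Icc 1 l, i * k i := by
    rw [hAdef]
    rw [Finset.card_subtype, Finset.filter_true_of_mem]
    · rw [Finset.card_biUnion ?outer]
      case outer =>
        intro i hi i' hi' hne
        rw [Function.onFun, Finset.disjoint_left]
        intro x hx hx'
        obtain ⟨v, hv, hx1⟩ := Finset.mem_biUnion.mp hx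
        obtain ⟨v', hv', hx2⟩ := Finset.mem_biUnion.mp hx'
        obtain ⟨j, hj, rfl⟩ := Finset.mem_image.mp hx1
        obtain ⟨j', hj', heq⟩ := Finset.mem_image.mp hx2
        injection heq with h1 h2
        rw [Finset.mem_Ioo] at hv hv'
        rw [Finset.mem_coe, Finset.mem_Icc] at hi hi'
        subst h2
        rcases Nat.lt_or_ge i i' with h | h
        · have := (spos_mono k).monotone (show i+1 ≤ i' by omega); omega
        · have := (spos_mono k).monotone (show i'+1 ≤ i by omega); omega
      refine Finset.sum_congr rfl fun i hi => ?_
      rw [Finset.mem_Icc] at hi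
      rw [Finset.card_biUnion ?inner]
      case inner =>
        intro v hv v' hv' hne
        rw [Function.onFun, Finset.disjoint_left]
        intro x hx hx'
        obtain ⟨j, hj, rfl⟩ := Finset.mem_image.mp hx
        obtain ⟨j', hj', heq⟩ := Finset.mem_image.mp hx'
        injection heq with h1 h2
        exact hne h2.symm
      have hjcard : ∀ v : ℕ, ((Finset.Icc 1 i).image (fun j => (spos k j, v))).card = i := by
        intro v
        rw [Finset.card_image_of_injOn, Nat.card_Icc]
        · omega
        · intro a _ b _ hab
          injection hab with h1 _
          exact (spos_mono k).injective h1
      rw [Finset.sum_congr rfl (fun v _ => hjcard v), Finset.sum_const, Nat.card_Ioo]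
      have hss := spos_succ k (show 1 ≤ i by omega)
      have h2 : spos k (i+1) - spos k i - 1 = k i := by omega
      rw [h2, smul_eq_mul, mul_comm]
    · intro x hx
      obtain ⟨i, hi, h2⟩ := Finset.mem_biUnion.mp hx
      obtain ⟨v, hv, h3⟩ := Finset.mem_biUnion.mp h2
      obtain ⟨j, hj, rfl⟩ := Finset.mem_image.mp h3
      rw [Finset.mem_Icc] at hj
      rw [Finset.mem_Ioo] at hv
      have := (spos_mono k).monotone hj.2
      simp only []
      omega
  -- the good event
  set Gset : Set Ω := (⋂ e ∈ A, (E e.1.1 e.1.2)ᶜ) ∩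
      ⋂ t ∈ Finset.range l, (⋂ e ∈ U t, (E e.1.1 e.1.2)ᶜ)ᶜ with hGdef
  have hmaster : μ Gset = ENNReal.ofReal ((1-p)^A.card
      * ∏ t ∈ Finset.range l, (1 - (1-p)^((U t).card))) :=
    master_meas μ h_indep (fun e => hEmeas _ _) hp0.le hp1.le (fun e => hEp _ _ e.2)
      l A U hAU hUU
  -- membership in the good event
  have hGiff : ∀ ω : Ω, ω ∈ Gset ↔
      ((∀ i, 1 ≤ i → i ≤ l → ∀ v, spos k i < v → v < spos k (i+1) →
          ∀ j, 1 ≤ j → j ≤ i → ω ∉ E (spos k j) v) ∧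
        (∀ t, t < l → ∃ j, 1 ≤ j ∧ j ≤ t+1 ∧ ω ∈ E (spos k j) (spos k (t+2)))) := by
    intro ω
    rw [hGdef]
    constructor
    · rintro ⟨h1, h2⟩
      constructor
      · intro i hi1 hi2 v hv1 hv2 j hj1 hj2
        have hjv : spos k j < v := lt_of_le_of_lt ((spos_mono k).monotone hj2) hv1
        have hmem : (⟨(spos k j, v), hjv⟩ : {x : ℕ × ℕ // x.1 < x.2}) ∈ A := by
          rw [hAdef, Finset.mem_subtype]
          exact Finset.mem_biUnion.mpr ⟨i, Finset.mem_Icc.mpr ⟨hi1, hi2⟩,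
            Finset.mem_biUnion.mpr ⟨v, Finset.mem_Ioo.mpr ⟨hv1, hv2⟩,
              Finset.mem_image.mpr ⟨j, Finset.mem_Icc.mpr ⟨hj1, hj2⟩, rfl⟩⟩⟩
        exact Set.mem_iInter₂.mp h1 _ hmem
      · intro t ht
        have h2t := Set.mem_iInter₂.mp h2 t (Finset.mem_range.mpr ht)
        rw [Set.mem_compl_iff] at h2t
        by_contra hcon
        push_neg at hcon
        apply h2t
        refine Set.mem_iInter₂.mpr fun e he => ?_
        obtain ⟨⟨a, b⟩, hab⟩ := e
        rw [hUdef, Finset.mem_subtype] at he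
        obtain ⟨j, hj, heq⟩ := Finset.mem_image.mp he
        rw [Finset.mem_Icc] at hj
        injection heq with ha hb
        subst ha; subst hb
        exact hcon j hj.1 hj.2
    · rintro ⟨h1, h2⟩
      constructor
      · refine Set.mem_iInter₂.mpr fun e he => ?_
        obtain ⟨⟨a, b⟩, hab⟩ := e
        rw [hAdef, Finset.mem_subtype] at he
        obtain ⟨i, hi, he2⟩ := Finset.mem_biUnion.mp he
        obtain ⟨v, hv, he3⟩ := Finset.mem_biUnion.mp he2
        obtain ⟨j, hj, heq⟩ := Finset.mem_image.mp he3
        rw [Finset.mem_Icc] at hi hj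
        rw [Finset.mem_Ioo] at hv
        injection heq with ha hb
        subst ha; subst hb
        exact h1 i hi.1 hi.2 v hv.1 hv.2 j hj.1 hj.2
      · refine Set.mem_iInter₂.mpr fun t ht => ?_
        rw [Finset.mem_range] at ht
        obtain ⟨j, hj1, hj2, hedge⟩ := h2 t ht
        rw [Set.mem_compl_iff]
        intro hall
        have hjlt : spos k j < spos k (t+2) := spos_mono k (by omega)
        have hmem : (⟨(spos k j, spos k (t+2)), hjlt⟩ : {x : ℕ × ℕ // x.1 < x.2}) ∈ U t := by
          rw [hUdef, Finset.mem_subtype]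
          exact Finset.mem_image.mpr ⟨j, Finset.mem_Icc.mpr ⟨hj1, hj2⟩, rfl⟩
        exact Set.mem_iInter₂.mp hall _ hmem hedge
  -- the bad event is null
  set D : Set Ω := {ω : Ω | ∃ n, ∀ v, n < v → ω ∉ reachSet E v} with hDdef
  have hDzero : μ D = 0 := measure_D_zero μ p ⟨hp0, hp1⟩ E hEmeas hEp h_indep
  have hTiffG : ∀ ω : Ω, ω ∉ D →
      ((∀ i ∈ Finset.Icc 1 l, gap E i ω = k i) ↔ ω ∈ Gset) := by
    intro ω hω
    have hinf : ∀ n, ∃ v, n < v ∧ ω ∈ reachSet E v := by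
      rw [hDdef] at hω
      simp only [Set.mem_setOf_eq] at hω
      push_neg at hω
      exact hω
    exact (lemA k l hinf).trans ((lemB k l).trans ((lemC k l).symm.trans (hGiff ω).symm))
  -- transfer the measure
  have hkey : μ {ω : Ω | ∀ i ∈ Finset.Icc 1 l, gap E i ω = k i} = μ Gset := by
    refine le_antisymm ?_ ?_
    · calc μ {ω : Ω | ∀ i ∈ Finset.Icc 1 l, gap E i ω = k i} ≤ μ (Gset ∪ D) := by
            refine measure_mono fun ω hω => ?_
            by_cases h : ω ∈ D
            · exact Or.inr h
            · exact Or.inl ((hTiffG ω h).1 hω)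
      _ ≤ μ Gset + μ D := measure_union_le _ _
      _ = μ Gset := by rw [hDzero, add_zero]
    · calc μ Gset ≤ μ ({ω : Ω | ∀ i ∈ Finset.Icc 1 l, gap E i ω = k i} ∪ D) := by
            refine measure_mono fun ω hω => ?_
            by_cases h : ω ∈ D
            · exact Or.inr h
            · exact Or.inl ((hTiffG ω h).2 hω)
      _ ≤ μ {ω : Ω | ∀ i ∈ Finset.Icc 1 l, gap E i ω = k i} + μ D := measure_union_le _ _
      _ = μ {ω : Ω | ∀ i ∈ Finset.Icc 1 l, gap E i ω = k i} := by rw [hDzero, add_zero]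
  rw [hkey, hmaster, hAcard]
  simp only [hUcard]
  rw [← ENNReal.ofReal_prod_of_nonneg (fun i _ => mul_nonneg
    (pow_nonneg (pow_nonneg h1p0 _) _)
    (by have := pow_le_one₀ h1p0 h1p1 (n := i); linarith))]
  congr 1
  have himg : (Finset.range l).image (fun t => t+1) = Finset.Icc 1 l := by
    ext x
    simp only [Finset.mem_image, Finset.mem_range, Finset.mem_Icc]
    constructor
    · rintro ⟨t, ht, rfl⟩; omega
    · rintro ⟨h1, h2⟩; exact ⟨x-1, by omega, by omega⟩
  calc (1-p) ^ (∑ i ∈ Finset.Icc 1 l, i * k i) * ∏ t ∈ Finset.range l, (1 - (1-p) ^ (t+1))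
      = (∏ i ∈ Finset.Icc 1 l, ((1-p)^i)^(k i)) * ∏ i ∈ Finset.Icc 1 l, (1 - (1-p)^i) := by
        congr 1
        · rw [← Finset.prod_pow_eq_pow_sum]
          exact Finset.prod_congr rfl fun i _ => (pow_mul (1-p) i (k i))
        · rw [← himg, Finset.prod_image (fun a _ b _ h => by omega)]
    _ = ∏ i ∈ Finset.Icc 1 l, ((1-p)^i)^(k i) * (1 - (1-p)^i) := Finset.prod_mul_distrib.symm
end

section
/- Let q ∈ (0, B] with B < 1, let Y be exponential with rate 1, and let X be the geometric variable coupled to Y via a common uniform U as X = inf{k ≥ 1 : U ≥ (1−q)^k}, Y = −log U. Then there is a constant C depending only on B such that |qX − Y| ≤ C q (Y + 1) almost surely. -/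
open Real MeasureTheory ProbabilityTheory

lemma coupling_pointwise (q u : ℝ) (hq0 : 0 < q) (hq1 : q < 1)
    (hu0 : 0 < u) (hu1 : u < 1) :
    |q * ((sInf {k : ℕ | 1 ≤ k ∧ (1 - q) ^ k ≤ u} : ℕ) : ℝ) - (-Real.log u)|
      ≤ q * (-Real.log u + 1) := by
  have h1q : 0 < 1 - q := by linarith
  -- nonemptiness
  obtain ⟨n, hn⟩ := exists_pow_lt_of_lt_one hu0 (by linarith : 1 - q < 1)
  have hne : ((n + 1) : ℕ) ∈ {k : ℕ | 1 ≤ k ∧ (1 - q) ^ k ≤ u} := by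
    refine ⟨Nat.le_add_left 1 n, ?_⟩
    exact le_trans (pow_le_pow_of_le_one h1q.le (by linarith) (Nat.le_succ n)) hn.le
  set X := sInf {k : ℕ | 1 ≤ k ∧ (1 - q) ^ k ≤ u} with hXdef
  obtain ⟨hX1, hXu⟩ := Nat.sInf_mem ⟨n + 1, hne⟩
  -- upper bound on u
  have hupper : u ≤ (1 - q) ^ (X - 1) := by
    rcases Nat.lt_or_ge 1 X with h | h
    · have hnot : (X - 1) ∉ {k : ℕ | 1 ≤ k ∧ (1 - q) ^ k ≤ u} :=
        Nat.notMem_of_lt_sInf (by omega)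
      by_contra hc
      exact hnot ⟨by omega, le_of_not_ge hc⟩
    · have : X = 1 := le_antisymm h hX1
      simp [this, hu1.le]
  set L : ℝ := -Real.log (1 - q) with hLdef
  have hL : 0 < L := by
    have := Real.log_neg h1q (by linarith)
    simpa [hLdef] using this
  set Y : ℝ := -Real.log u with hYdef
  have hY0 : 0 ≤ Y := by
    have := Real.log_nonpos hu0.le hu1.le
    simpa [hYdef] using this
  set x : ℝ := (X : ℝ) with hxdef
  -- Y ≤ x * L
  have h1 : Y ≤ x * L := by
    have := Real.log_le_log (pow_pos h1q X) hXu
    rw [Real.log_pow] at this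
    simp only [hYdef, hLdef, hxdef]
    nlinarith [this]
  -- x * L ≤ Y + L
  have h2 : x * L ≤ Y + L := by
    have := Real.log_le_log hu0 hupper
    rw [Real.log_pow] at this
    have hcast : ((X - 1 : ℕ) : ℝ) = x - 1 := by
      rw [hxdef, Nat.cast_sub hX1]; norm_num; rfl
    rw [hcast] at this
    simp only [hYdef, hLdef]
    nlinarith [this]
  -- q ≤ L
  have h3 : q ≤ L := by
    have := Real.log_le_sub_one_of_pos h1q
    simp only [hLdef]; linarith
  -- L * (1 - q) ≤ q
  have h4 : L * (1 - q) ≤ q := by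
    have hpos : 0 < (1 - q)⁻¹ := inv_pos.mpr h1q
    have := Real.log_le_sub_one_of_pos hpos
    rw [Real.log_inv] at this
    have h5 : L ≤ (1 - q)⁻¹ - 1 := by simp only [hLdef]; linarith
    have := mul_le_mul_of_nonneg_right h5 h1q.le
    calc L * (1 - q) ≤ ((1 - q)⁻¹ - 1) * (1 - q) := this
      _ = q := by field_simp; ring
  -- key bounds
  have key1 : q * x ≤ Y + q := by
    have e1 : q * (x * L) ≤ q * (Y + L) := mul_le_mul_of_nonneg_left h2 hq0.le
    have e2 : q * Y ≤ L * Y := mul_le_mul_of_nonneg_right h3 hY0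
    have e3 : (q * x) * L ≤ (Y + q) * L := by nlinarith
    exact le_of_mul_le_mul_right e3 hL
  have key2 : Y - q * x ≤ q * Y := by
    have e1 : q * Y ≤ q * (x * L) := mul_le_mul_of_nonneg_left h1 hq0.le
    have e2 : L - q ≤ L * q := by linarith
    have e3 : Y * (L - q) ≤ Y * (L * q) := mul_le_mul_of_nonneg_left e2 hY0
    have e4 : (Y - q * x) * L ≤ (q * Y) * L := by nlinarith
    exact le_of_mul_le_mul_right e4 hL
  rw [abs_le]
  constructor <;> nlinarith

/-- For `q ∈ (0,B]` with `B < 1` and the standard coupling `Y = −log U`,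
`X = inf{k ≥ 1 : U ≥ (1−q)^k}` of a geometric and an exponential variable through a common
uniform `U`, there is a constant `C` depending only on `B` with
`|qX − Y| ≤ C q (Y + 1)` almost surely. -/
theorem coupling_error_bound (B : ℝ) (hB : B < 1) :
    ∃ C > (0:ℝ), ∀ {Ω : Type} [MeasurableSpace Ω] (μ : Measure Ω) [IsProbabilityMeasure μ]
      (q : ℝ), q ∈ Set.Ioc (0:ℝ) B →
      ∀ (U : Ω → ℝ), Measure.map U μ = volume.restrict (Set.Icc 0 1) →
      ∀ (Y : Ω → ℝ), Y = (fun ω => -Real.log (U ω)) →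
      ∀ (X : Ω → ℕ), X = (fun ω => sInf {k : ℕ | 1 ≤ k ∧ (1 - q) ^ k ≤ U ω}) →
        ∀ᵐ ω ∂μ, |q * (X ω : ℝ) - Y ω| ≤ C * q * (Y ω + 1) := by
  refine ⟨1, one_pos, ?_⟩
  intro Ω _ μ _ q hq U hU Y hY X hX
  have hUm : AEMeasurable U μ := by
    by_contra h
    have h0 : Measure.map U μ = 0 := Measure.map_of_not_aemeasurable h
    rw [hU] at h0
    have : (volume.restrict (Set.Icc (0:ℝ) 1)) Set.univ = 0 := by rw [h0]; simp
    rw [Measure.restrict_apply_univ, Real.volume_Icc] at this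
    norm_num at this
  have hae : ∀ᵐ y ∂(Measure.map U μ), y ∈ Set.Ioo (0:ℝ) 1 := by
    rw [hU]
    rw [ae_restrict_iff' measurableSet_Icc]
    have : volume ({y : ℝ | y ∈ Set.Icc (0:ℝ) 1 ∧ y ∉ Set.Ioo (0:ℝ) 1}) = 0 := by
      have hsub : {y : ℝ | y ∈ Set.Icc (0:ℝ) 1 ∧ y ∉ Set.Ioo (0:ℝ) 1} ⊆ {0, 1} := by
        intro y hy
        simp only [Set.mem_Icc, Set.mem_Ioo, not_and, not_lt] at hy
        rcases hy with ⟨⟨h0, h1⟩, h2⟩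
        rcases eq_or_lt_of_le h0 with h | h
        · left; exact h.symm
        · right; exact le_antisymm h1 (h2 h)
      exact measure_mono_null hsub ((Set.toFinite ({0,1} : Set ℝ)).measure_zero _)
    rw [ae_iff]
    convert this using 2
    ext y
    simp only [Set.mem_setOf_eq]
    tauto
  have hae2 : ∀ᵐ ω ∂μ, U ω ∈ Set.Ioo (0:ℝ) 1 :=
    (ae_map_iff hUm measurableSet_Ioo).mp hae
  filter_upwards [hae2] with ω hω
  rw [hY, hX]
  simp only [one_mul]
  exact coupling_pointwise q (U ω) hq.1 (lt_of_le_of_lt hq.2 hB) hω.1 hω.2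
end

section
/- Probabilistic Dini lemma: let (F_n)_n be random non-decreasing functions on an interval I ⊆ ℝ such that for every fixed a ∈ I, F_n(a) converges in law to a deterministic value f(a), where f is continuous and non-decreasing on I. Then F_n converges in law to f uniformly on every compact subset of I. -/
open Filter MeasureTheory

/-- Probabilistic Dini lemma: if random non-decreasing functions `F_n` on an interval `I ⊆ ℝ`
converge in law (equivalently, in probability, the limit being deterministic) pointwise to a
continuous non-decreasing function `f`, then they converge to `f` uniformly in probability on
every compact subset of `I`. -/
theorem probabilistic_dini
    {Ω : Type*} [MeasurableSpace Ω] (μ : Measure Ω) [IsProbabilityMeasure μ]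
    (I : Set ℝ) (hI : I.OrdConnected)
    (F : ℕ → Ω → ℝ → ℝ) (f : ℝ → ℝ)
    (h_mono : ∀ n ω, MonotoneOn (F n ω) I)
    (hf_cont : ContinuousOn f I) (hf_mono : MonotoneOn f I)
    (h_conv : ∀ a ∈ I, ∀ ε > (0:ℝ),
      Tendsto (fun n => μ {ω | ε < |F n ω a - f a|}) atTop (nhds 0)) :
    ∀ K ⊆ I, IsCompact K → ∀ ε > (0:ℝ),
      Tendsto (fun n => μ {ω | ∃ a ∈ K, ε < |F n ω a - f a|}) atTop (nhds 0) := by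
  intro K hKI hK ε hε
  rcases K.eq_empty_or_nonempty with rfl | hKne
  · simpa using (tendsto_const_nhds :
      Tendsto (fun _ : ℕ => (0 : ENNReal)) atTop (nhds 0))
  obtain ⟨a₀, hLe⟩ := hK.exists_isLeast hKne
  obtain ⟨a₁, hGe⟩ := hK.exists_isGreatest hKne
  have ha₀I : a₀ ∈ I := hKI hLe.1
  have ha₁I : a₁ ∈ I := hKI hGe.1
  have hIcc : Set.Icc a₀ a₁ ⊆ I := hI.out ha₀I ha₁I
  have hKsub : K ⊆ Set.Icc a₀ a₁ := fun a ha => ⟨hLe.2 ha, hGe.2 ha⟩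
  have h01 : a₀ ≤ a₁ := hLe.2 hGe.1
  -- uniform continuity of f on [a₀, a₁]
  have hUC : UniformContinuousOn f (Set.Icc a₀ a₁) :=
    isCompact_Icc.uniformContinuousOn_of_continuous (hf_cont.mono hIcc)
  obtain ⟨δ, hδ, hδ'⟩ := Metric.uniformContinuousOn_iff.mp hUC (ε/2) (by linarith)
  obtain ⟨m, hm⟩ := exists_nat_gt ((a₁ - a₀)/δ)
  set M : ℕ := m + 1 with hMdef
  have hMpos : (0:ℝ) < (M : ℝ) := by exact_mod_cast Nat.succ_pos m
  set step : ℝ := (a₁ - a₀) / M with hstepdef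
  have hstep0 : 0 ≤ step := div_nonneg (by linarith) hMpos.le
  have hstepδ : step < δ := by
    rw [hstepdef, div_lt_iff₀ hMpos]
    have h1 : (a₁ - a₀)/δ < (M:ℝ) := by
      have : (m:ℝ) ≤ (M:ℝ) := by exact_mod_cast Nat.le_succ m
      linarith
    have := (div_lt_iff₀ hδ).mp h1
    linarith [this]
  set g : ℕ → ℝ := fun j => a₀ + j * step with hgdef
  have hgM : g M = a₁ := by
    simp only [hgdef, hstepdef]
    field_simp
    ring
  have hgIcc : ∀ j : ℕ, j ≤ M → g j ∈ Set.Icc a₀ a₁ := by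
    intro j hj
    have hjc : (j:ℝ) ≤ (M:ℝ) := by exact_mod_cast hj
    constructor
    · have : 0 ≤ (j:ℝ) * step := mul_nonneg (Nat.cast_nonneg j) hstep0
      simp only [hgdef]; linarith
    · have h1 : (j:ℝ) * step ≤ (M:ℝ) * step :=
        mul_le_mul_of_nonneg_right hjc hstep0
      have h2 : (M:ℝ) * step = a₁ - a₀ := by
        rw [hstepdef]; field_simp
      simp only [hgdef]; linarith
  have hgI : ∀ j : ℕ, j ≤ M → g j ∈ I := fun j hj => hIcc (hgIcc j hj)
  have hosc : ∀ j : ℕ, j + 1 ≤ M → f (g (j+1)) - f (g j) < ε/2 := by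
    intro j hj
    have h1 : g (j+1) ∈ Set.Icc a₀ a₁ := hgIcc _ hj
    have h2 : g j ∈ Set.Icc a₀ a₁ := hgIcc _ (by omega)
    have hd : dist (g (j+1)) (g j) < δ := by
      have : g (j+1) - g j = step := by
        simp only [hgdef]; push_cast; ring
      rw [Real.dist_eq, this, abs_of_nonneg hstep0]
      exact hstepδ
    have := hδ' _ h1 _ h2 hd
    rw [Real.dist_eq] at this
    exact lt_of_le_of_lt (le_abs_self _) this
  -- key inclusion
  have key : ∀ n, {ω | ∃ a ∈ K, ε < |F n ω a - f a|} ⊆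
      ⋃ j ∈ Finset.range (M+1), {ω | ε/2 < |F n ω (g j) - f (g j)|} := by
    intro n ω hω
    obtain ⟨a, haK, ha⟩ := hω
    have haIcc : a ∈ Set.Icc a₀ a₁ := hKsub haK
    have haI : a ∈ I := hKI haK
    set j : ℕ := min (M - 1) ⌊(a - a₀)/step⌋₊ with hjdef
    have hjM : j + 1 ≤ M := by
      have : j ≤ M - 1 := min_le_left _ _
      omega
    -- g j ≤ a
    have hgja : g j ≤ a := by
      rcases eq_or_lt_of_le hstep0 with hs | hs
      · simp only [hgdef, ← hs, mul_zero]
        linarith [haIcc.1]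
      · have hjle : (j:ℝ) ≤ (a - a₀)/step := by
          have h1 : j ≤ ⌊(a - a₀)/step⌋₊ := min_le_right _ _
          have h2 : (⌊(a - a₀)/step⌋₊ : ℝ) ≤ (a - a₀)/step :=
            Nat.floor_le (div_nonneg (by linarith [haIcc.1]) hs.le)
          calc (j:ℝ) ≤ (⌊(a - a₀)/step⌋₊ : ℝ) := by exact_mod_cast h1
            _ ≤ _ := h2
        have := (le_div_iff₀ hs).mp hjle
        simp only [hgdef]; linarith
    -- a ≤ g (j+1)
    have hagj : a ≤ g (j+1) := by
      by_cases hfl : ⌊(a - a₀)/step⌋₊ ≤ M - 1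
      · have hjeq : j = ⌊(a - a₀)/step⌋₊ := min_eq_right hfl
        rcases eq_or_lt_of_le hstep0 with hs | hs
        · -- step = 0, so a₁ = a₀ and a = a₀
          have hM0 : (M:ℝ) * step = a₁ - a₀ := by rw [hstepdef]; field_simp
          rw [← hs] at hM0
          have ha10 : a₁ = a₀ := by linarith [hM0]
          have : a ≤ a₀ := by rw [← ha10]; exact haIcc.2
          simp only [hgdef, ← hs, mul_zero]
          linarith
        · have h1 : (a - a₀)/step < ⌊(a - a₀)/step⌋₊ + 1 :=
            Nat.lt_floor_add_one _
          have h2 : (a - a₀)/step < (j:ℝ) + 1 := by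
            rw [hjeq]; exact_mod_cast h1
          have := (div_lt_iff₀ hs).mp h2
          simp only [hgdef]; push_cast; linarith
      · have hjeq : j = M - 1 := min_eq_left (by omega)
        have hj1 : j + 1 = M := by omega
        rw [hj1, hgM]
        exact haIcc.2
    -- monotonicity
    have hF1 : F n ω (g j) ≤ F n ω a :=
      h_mono n ω (hgI j (by omega)) haI hgja
    have hF2 : F n ω a ≤ F n ω (g (j+1)) :=
      h_mono n ω haI (hgI (j+1) hjM) hagj
    have hf1 : f (g j) ≤ f a := hf_mono (hgI j (by omega)) haI hgja
    have hf2 : f a ≤ f (g (j+1)) := hf_mono haI (hgI (j+1) hjM) hagj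
    have hoscj : f (g (j+1)) - f (g j) < ε/2 := hosc j hjM
    rcases lt_abs.mp ha with h | h
    · -- ε < F n ω a - f a : witness j+1
      refine Set.mem_biUnion (Finset.mem_range.mpr (by omega : j + 1 < M + 1)) ?_
      have h3 : ε/2 < F n ω (g (j+1)) - f (g (j+1)) := by linarith
      exact lt_of_lt_of_le h3 (le_abs_self _)
    · -- ε < f a - F n ω a : witness j
      refine Set.mem_biUnion (Finset.mem_range.mpr (by omega : j < M + 1)) ?_
      have h3 : ε/2 < f (g j) - F n ω (g j) := by linarith
      exact h3.trans_le ((le_abs_self _).trans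
        (abs_sub_comm (f (g j)) (F n ω (g j))).le)
  have hbound : ∀ n, μ {ω | ∃ a ∈ K, ε < |F n ω a - f a|} ≤
      ∑ j ∈ Finset.range (M+1), μ {ω | ε/2 < |F n ω (g j) - f (g j)|} :=
    fun n => (measure_mono (key n)).trans (measure_biUnion_finset_le _ _)
  have hsum : Tendsto
      (fun n => ∑ j ∈ Finset.range (M+1), μ {ω | ε/2 < |F n ω (g j) - f (g j)|})
      atTop (nhds 0) := by
    have h := tendsto_finset_sum (Finset.range (M+1))
      (fun j hj => h_conv (g j) (hgI j (by
        have := Finset.mem_range.mp hj; omega)) (ε/2) (by linarith))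
    simpa using h
  exact tendsto_of_tendsto_of_tendsto_of_le_of_le tendsto_const_nhds hsum
    (fun n => zero_le) hbound
end

section
/- If 𝔊 is a standard Gumbel random variable and b > 0, then E[1/(1 + b e^{−𝔊})] = (1/b) e^{1/b} ∫_{1/b}^∞ (e^{−t}/t) dt. -/
open Real MeasureTheory

/-- For a standard Gumbel variable `𝔊` (density `exp(−(z+e^{−z}))`) and `b > 0`,
`E[1/(1 + b e^{−𝔊})] = (1/b) e^{1/b} ∫_{1/b}^∞ e^{−t}/t dt`. -/
theorem gumbel_logistic_expectation (b : ℝ) (hb : 0 < b) :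
    ∫ z : ℝ, Real.exp (-(z + Real.exp (-z))) * (1 / (1 + b * Real.exp (-z)))
      = (1 / b) * Real.exp (1 / b) * ∫ t in Set.Ioi (1 / b), Real.exp (-t) / t := by
  set f : ℝ → ℝ := fun z => Real.exp (-z) + 1 / b with hf
  have himg : f '' Set.univ = Set.Ioi (1 / b) := by
    rw [Set.image_univ]
    ext t
    simp only [Set.mem_range, Set.mem_Ioi, hf]
    constructor
    · rintro ⟨z, rfl⟩
      have := Real.exp_pos (-z)
      linarith
    · intro ht
      refine ⟨-Real.log (t - 1 / b), ?_⟩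
      rw [neg_neg, Real.exp_log (by linarith)]
      ring
  have hderiv : ∀ x ∈ Set.univ, HasDerivWithinAt f (-Real.exp (-x)) Set.univ x := by
    intro x _
    have h := ((Real.hasDerivAt_exp (-x)).comp x (hasDerivAt_neg x)).add_const (1 / b)
    rw [show -Real.exp (-x) = Real.exp (-x) * -1 by ring]
    exact h.hasDerivWithinAt
  have hinj : Set.InjOn f Set.univ := by
    intro x _ y _ hxy
    have : Real.exp (-x) = Real.exp (-y) := by
      simpa [hf] using hxy
    have := Real.exp_injective this
    linarith
  have key := MeasureTheory.integral_image_eq_integral_abs_deriv_smul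
    MeasurableSet.univ hderiv hinj (fun t => Real.exp (-t) / t)
  rw [himg] at key
  rw [key]
  rw [MeasureTheory.setIntegral_univ, ← MeasureTheory.integral_const_mul]
  congr 1
  funext z
  have h1 : (0:ℝ) < Real.exp (-z) + 1 / b := by positivity
  have h2 : (0:ℝ) < 1 + b * Real.exp (-z) := by positivity
  simp only [hf, abs_neg, abs_of_pos (Real.exp_pos (-z)), smul_eq_mul]
  rw [show (-(z + Real.exp (-z))) = -z + -Real.exp (-z) by ring, Real.exp_add]
  rw [show (-(Real.exp (-z) + 1 / b)) = -Real.exp (-z) + -(1/b) by ring, Real.exp_add]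
  set E := Real.exp (-z) with hE
  set G := Real.exp (-E) with hG
  have hcancel : Real.exp (1 / b) * Real.exp (-(1 / b)) = 1 := by
    rw [← Real.exp_add]; simp
  have hrhs : 1 / b * Real.exp (1 / b) * (E * (G * Real.exp (-(1 / b)) / (E + 1 / b)))
      = (Real.exp (1 / b) * Real.exp (-(1 / b))) * (E * G / (b * (E + 1 / b))) := by
    field_simp
  rw [hrhs, hcancel, one_mul]
  have hb' : b * (E + 1 / b) = 1 + b * E := by
    field_simp
    ring
  rw [hb', mul_one_div]
end

section
/- For a standard Gumbel random variable 𝔊 and x ∈ ℝ, 1 − e^{e^{−x} − x} ∫_{e^{−x}}^∞ (e^{−t}/t) dt = 1/2 + (1/2) E[tanh((x − 𝔊)/2)]. -/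
open Real MeasureTheory

lemma gumbel_cov (c : ℝ) (hc : 0 ≤ c) (g : ℝ → ℝ) :
    ∫ t in Set.Ioi c, g t = ∫ z : ℝ, Real.exp (-z) * g (c + Real.exp (-z)) := by
  have himg : (fun z : ℝ => c + Real.exp (-z)) '' Set.univ = Set.Ioi c := by
    ext t
    simp only [Set.image_univ, Set.mem_range, Set.mem_Ioi]
    constructor
    · rintro ⟨z, rfl⟩; have := Real.exp_pos (-z); linarith
    · intro ht
      exact ⟨-Real.log (t - c), by rw [neg_neg, Real.exp_log (by linarith)]; ring⟩
  have hderiv : ∀ z ∈ (Set.univ : Set ℝ),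
      HasDerivWithinAt (fun z : ℝ => c + Real.exp (-z)) (-Real.exp (-z)) Set.univ z := by
    intro z _
    have : HasDerivAt (fun z : ℝ => c + Real.exp (-z)) (-Real.exp (-z)) z := by
      simpa using ((Real.hasDerivAt_exp (-z)).comp z (hasDerivAt_neg z)).const_add c
    exact this.hasDerivWithinAt
  have hinj : Set.InjOn (fun z : ℝ => c + Real.exp (-z)) Set.univ := by
    intro a _ b _ h
    have h2 := add_left_cancel h
    have := Real.exp_injective h2
    linarith [neg_injective this]
  have := MeasureTheory.integral_image_eq_integral_abs_deriv_smul MeasurableSet.univ hderiv hinj g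
  rw [himg] at this
  rw [this, MeasureTheory.setIntegral_univ]
  congr 1
  funext z
  rw [abs_neg, abs_of_pos (Real.exp_pos _)]
  simp [smul_eq_mul]

lemma gumbel_cov_integrable (c : ℝ) (hc : 0 ≤ c) (g : ℝ → ℝ)
    (h : MeasureTheory.IntegrableOn g (Set.Ioi c)) :
    MeasureTheory.Integrable (fun z : ℝ => Real.exp (-z) * g (c + Real.exp (-z))) := by
  have himg : (fun z : ℝ => c + Real.exp (-z)) '' Set.univ = Set.Ioi c := by
    ext t
    simp only [Set.image_univ, Set.mem_range, Set.mem_Ioi]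
    constructor
    · rintro ⟨z, rfl⟩; have := Real.exp_pos (-z); linarith
    · intro ht
      exact ⟨-Real.log (t - c), by rw [neg_neg, Real.exp_log (by linarith)]; ring⟩
  have hderiv : ∀ z ∈ (Set.univ : Set ℝ),
      HasDerivWithinAt (fun z : ℝ => c + Real.exp (-z)) (-Real.exp (-z)) Set.univ z := by
    intro z _
    have : HasDerivAt (fun z : ℝ => c + Real.exp (-z)) (-Real.exp (-z)) z := by
      simpa using ((Real.hasDerivAt_exp (-z)).comp z (hasDerivAt_neg z)).const_add c
    exact this.hasDerivWithinAt
  have hinj : Set.InjOn (fun z : ℝ => c + Real.exp (-z)) Set.univ := by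
    intro a _ b _ hab
    have h2 := add_left_cancel hab
    have := Real.exp_injective h2
    linarith [neg_injective this]
  have := (MeasureTheory.integrableOn_image_iff_integrableOn_abs_deriv_smul
    MeasurableSet.univ hderiv hinj g).mp (by rwa [himg])
  rw [MeasureTheory.integrableOn_univ] at this
  exact this.congr (Filter.EventuallyEq.of_eq (funext fun z => by
      rw [abs_neg, abs_of_pos (Real.exp_pos _)]; simp [smul_eq_mul]))

theorem tanh_half_eq (u : ℝ) : Real.tanh (u / 2) = 1 - 2 / (1 + Real.exp u) := by
  have hs : Real.exp (u / 2) > 0 := Real.exp_pos _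
  have h2 : Real.exp u = Real.exp (u / 2) * Real.exp (u / 2) := by
    rw [← Real.exp_add]; ring_nf
  rw [Real.tanh_eq_sinh_div_cosh, Real.sinh_eq, Real.cosh_eq, Real.exp_neg, h2]
  have h1 : 1 + Real.exp (u / 2) * Real.exp (u / 2) > 0 := by positivity
  field_simp
  ring

/-- For a standard Gumbel variable `𝔊` (density `exp(−(z+e^{−z}))`) and `x ∈ ℝ`,
`1 − e^{e^{−x} − x} ∫_{e^{−x}}^∞ e^{−t}/t dt = 1/2 + (1/2) E[tanh((x − 𝔊)/2)]`. -/
theorem gumbel_tanh_identity (x : ℝ) :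
    1 - Real.exp (Real.exp (-x) - x) *
        ∫ t in Set.Ioi (Real.exp (-x)), Real.exp (-t) / t
      = 1 / 2 + (1 / 2) *
          ∫ z : ℝ, Real.exp (-(z + Real.exp (-z))) * Real.tanh ((x - z) / 2) := by
  set a := Real.exp (-x) with ha
  have ha0 : 0 < a := Real.exp_pos _
  -- normalization
  have hnorm : ∫ z : ℝ, Real.exp (-(z + Real.exp (-z))) = 1 := by
    calc ∫ z : ℝ, Real.exp (-(z + Real.exp (-z)))
        = ∫ z : ℝ, Real.exp (-z) * Real.exp (-(0 + Real.exp (-z))) := by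
          congr 1; funext z; rw [zero_add, ← Real.exp_add]; ring_nf
      _ = ∫ t in Set.Ioi (0:ℝ), Real.exp (-t) := (gumbel_cov 0 le_rfl (fun t => Real.exp (-t))).symm
      _ = 1 := integral_exp_neg_Ioi_zero
  -- integrability of the Gumbel density
  have hIA : MeasureTheory.Integrable (fun z : ℝ => Real.exp (-(z + Real.exp (-z)))) := by
    have := gumbel_cov_integrable 0 le_rfl (fun t => Real.exp (-t))
      (by simpa using exp_neg_integrableOn_Ioi 0 one_pos)
    exact this.congr (Filter.EventuallyEq.of_eq (funext fun z => by
      rw [zero_add, ← Real.exp_add]; ring_nf))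
  -- integrability of the logistic-weighted density
  have hIB : MeasureTheory.Integrable
      (fun z : ℝ => Real.exp (-(z + Real.exp (-z))) / (1 + Real.exp (x - z))) := by
    refine hIA.mono' ?_ ?_
    · apply Continuous.aestronglyMeasurable
      refine Continuous.div (Real.continuous_exp.comp (by continuity))
        (continuous_const.add (Real.continuous_exp.comp (by continuity)))
        (fun z => by positivity)
    · filter_upwards with z
      rw [Real.norm_eq_abs, abs_of_nonneg (by positivity), div_le_iff₀ (by positivity)]
      nlinarith [Real.exp_pos (x - z), Real.exp_pos (-(z + Real.exp (-z)))]
  -- change of variables for the weighted integral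
  have hB : ∫ z : ℝ, Real.exp (-(z + Real.exp (-z))) / (1 + Real.exp (x - z))
      = Real.exp (a - x) * ∫ t in Set.Ioi a, Real.exp (-t) / t := by
    rw [gumbel_cov a ha0.le (fun t => Real.exp (-t) / t), ← MeasureTheory.integral_const_mul]
    congr 1
    funext z
    have hden : (0:ℝ) < a + Real.exp (-z) := by positivity
    have key : 1 + Real.exp (x - z) = Real.exp x * (a + Real.exp (-z)) := by
      rw [mul_add, ha, ← Real.exp_add, ← Real.exp_add]
      norm_num [sub_eq_add_neg]
    have e1 : Real.exp (-(z + Real.exp (-z)))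
        = Real.exp (-z) * Real.exp (-Real.exp (-z)) := by
      rw [← Real.exp_add, Real.exp_eq_exp]; ring
    have e6 : Real.exp (a - x) * Real.exp (-(a + Real.exp (-z))) * Real.exp x
        = Real.exp (-Real.exp (-z)) := by
      rw [← Real.exp_add, ← Real.exp_add, Real.exp_eq_exp]; ring
    rw [key, e1, mul_div_assoc', mul_div_assoc',
      div_eq_div_iff (by positivity) (by positivity)]
    linear_combination (-(Real.exp (-z) * (a + Real.exp (-z)))) * e6
  -- pointwise tanh decomposition
  have hpt : ∀ z : ℝ, Real.exp (-(z + Real.exp (-z))) * Real.tanh ((x - z) / 2)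
      = Real.exp (-(z + Real.exp (-z)))
        - 2 * (Real.exp (-(z + Real.exp (-z))) / (1 + Real.exp (x - z))) := by
    intro z
    rw [tanh_half_eq]
    have h1 : (0:ℝ) < 1 + Real.exp (x - z) := by positivity
    field_simp
  simp only [hpt]
  rw [MeasureTheory.integral_sub hIA (hIB.const_mul 2), MeasureTheory.integral_const_mul,
    hnorm, hB]
  ring
end

section
/- Let q_i = 1 − (1−p)^i and a > 0. Then for all p ∈ (0,1/2) and 1 ≤ i ≤ ⌊a/p⌋, one has 1/q_i − 1/(ip) ≤ a/(2(1 − e^{−a})) + C(a)/i for some constant C(a) > 0 depending only on a; in particular 1/q_i − 1/(ip) is bounded uniformly by a constant depending only on a. -/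
/-!
Since `1 - p ≤ e^{-p}`, we have `q_i ≥ 1 - e^{-s}` with `s = i p ∈ (0, a]`, so it suffices to bound
`1/(1 - e^{-s}) - 1/s`. The inequality `e^{-s} ≤ 1 - s + s²/2` bounds this by `s / (2(1 - e^{-s}))`,
and this is increasing in `s` because `(1 - e^{-s})/s` is minus a secant slope of the convex
function `e^{-s}` at `0`.
-/

open Real Set

lemma one_sub_exp_neg_pos {s : ℝ} (hs : 0 < s) : 0 < 1 - exp (-s) := by
  simpa using exp_lt_one_iff.2 (neg_lt_zero.2 hs)

lemma exp_neg_le_one_sub_add_sq_div_two {s : ℝ} (hs : 0 ≤ s) : exp (-s) ≤ 1 - s + s ^ 2 / 2 := by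
  have hquad : 0 ≤ 1 - s + s ^ 2 / 2 := by nlinarith [sq_nonneg (s - 1)]
  rw [exp_neg, inv_le_iff_one_le_mul₀ (exp_pos s)]
  -- `(1 - s + s²/2) (1 + s + s²/2) = 1 + s⁴/4`
  nlinarith [mul_le_mul_of_nonneg_left (quadratic_le_exp_of_nonneg hs) hquad, sq_nonneg (s ^ 2)]

lemma one_div_one_sub_exp_neg_sub_one_div_le {s : ℝ} (hs : 0 < s) :
    1 / (1 - exp (-s)) - 1 / s ≤ s / (2 * (1 - exp (-s))) := by
  have hE := one_sub_exp_neg_pos hs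
  rw [div_sub_div _ _ hE.ne' hs.ne', div_le_div_iff₀ (by positivity) (by positivity)]
  nlinarith [mul_le_mul_of_nonneg_right
    (show s - (1 - exp (-s)) ≤ s ^ 2 / 2 by linarith [exp_neg_le_one_sub_add_sq_div_two hs.le])
    (show 0 ≤ 2 * (1 - exp (-s)) by linarith)]

lemma antitoneOn_one_sub_exp_neg_div : AntitoneOn (fun s ↦ (1 - exp (-s)) / s) (Ioi 0) := by
  intro s hs t ht hst
  have hslope := (convexOn_exp.comp_linearMap (-LinearMap.id)).slope_mono (mem_univ 0)
    ⟨mem_univ _, ne_of_gt hs⟩ ⟨mem_univ _, ne_of_gt ht⟩ hst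
  simp only [slope_def_field, Function.comp_apply, LinearMap.neg_apply, LinearMap.id_apply,
    neg_zero, exp_zero, sub_zero] at hslope
  simp only [← neg_sub _ (1 : ℝ), neg_div]
  exact neg_le_neg hslope

lemma div_one_sub_exp_neg_le {s t : ℝ} (hs : 0 < s) (hst : s ≤ t) :
    s / (1 - exp (-s)) ≤ t / (1 - exp (-t)) := by
  rw [← inv_div, ← inv_div (1 - exp (-t))]
  have ht := hs.trans_le hst
  exact inv_anti₀ (div_pos (one_sub_exp_neg_pos ht) ht)
    (antitoneOn_one_sub_exp_neg_div hs ht hst)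

lemma one_sub_pow_le_exp_neg_mul {p : ℝ} (hp : p ≤ 1) (i : ℕ) : (1 - p) ^ i ≤ exp (-(i * p)) := by
  calc (1 - p) ^ i ≤ exp (-p) ^ i := pow_le_pow_left₀ (by linarith) (one_sub_le_exp_neg p) i
    _ = exp (-(i * p)) := by rw [← exp_nat_mul, mul_neg]

lemma one_div_one_sub_one_sub_pow_sub_le {p t : ℝ} {i : ℕ} (hp0 : 0 < p) (hp1 : p ≤ 1)
    (hi : 0 < i) (hit : i * p ≤ t) :
    1 / (1 - (1 - p) ^ i) - 1 / (i * p) ≤ t / (2 * (1 - exp (-t))) := by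
  have hs : (0 : ℝ) < i * p := by positivity
  have hE := one_sub_exp_neg_pos hs
  calc 1 / (1 - (1 - p) ^ i) - 1 / (i * p)
      ≤ 1 / (1 - exp (-(i * p))) - 1 / (i * p) := by
        gcongr
        exact one_sub_pow_le_exp_neg_mul hp1 i
    _ ≤ i * p / (2 * (1 - exp (-(i * p)))) := one_div_one_sub_exp_neg_sub_one_div_le hs
    _ ≤ t / (2 * (1 - exp (-t))) := by
        simp only [mul_comm (2 : ℝ), ← div_div]
        gcongr ?_ / _
        exact div_one_sub_exp_neg_le hs hit

theorem geometric_mean_comparison_general (a : ℝ) :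
    ∃ C > (0:ℝ), ∃ D : ℝ, ∀ p ∈ Set.Ioo (0:ℝ) (1/2), ∀ i : ℕ,
      1 ≤ i → i ≤ Nat.floor (a / p) →
        1 / (1 - (1 - p) ^ i) - 1 / (i * p)
          ≤ a / (2 * (1 - Real.exp (-a))) + C / i ∧
        1 / (1 - (1 - p) ^ i) - 1 / (i * p) ≤ D := by
  refine ⟨1, one_pos, a / (2 * (1 - exp (-a))), fun p ⟨hp0, hp2⟩ i hi hia ↦ ?_⟩
  have hia' : (i : ℝ) * p ≤ a := by
    rw [← le_div_iff₀ hp0]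
    exact (Nat.le_floor_iff' (by omega)).1 hia
  have key := one_div_one_sub_one_sub_pow_sub_le hp0 (by linarith) hi hia'
  exact ⟨key.trans (le_add_of_nonneg_right (by positivity)), key⟩

/-- With `q_i = 1 − (1−p)^i`, for `p ∈ (0,1/2)` and `1 ≤ i ≤ ⌊a/p⌋`,
`1/q_i − 1/(ip) ≤ a/(2(1−e^{−a})) + C(a)/i` for a constant `C(a) > 0` depending only on `a`;
in particular `1/q_i − 1/(ip)` is bounded by a constant depending only on `a`. -/
theorem geometric_mean_comparison (a : ℝ) (ha : 0 < a) :
    ∃ C > (0:ℝ), ∃ D : ℝ, ∀ p ∈ Set.Ioo (0:ℝ) (1/2), ∀ i : ℕ,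
      1 ≤ i → i ≤ Nat.floor (a / p) →
        1 / (1 - (1 - p) ^ i) - 1 / (i * p)
          ≤ a / (2 * (1 - Real.exp (-a))) + C / i ∧
        1 / (1 - (1 - p) ^ i) - 1 / (i * p) ≤ D :=
  geometric_mean_comparison_general a
end

section
/- Let Z_i = (1/q_i − 1/(ip)) Y_i + (1/q_i)(q_i X_i − Y_i) with the coupling X_i = inf{k ≥ 1 : U_i ≥ (1−q_i)^k}, Y_i = −log U_i, U_i i.i.d. uniform on [0,1], and q_i = 1 − (1−p)^i, for 1 ≤ i ≤ ⌊a/p⌋ and p ∈ (0,1/2). Then Var(Z_i) is bounded by a constant depending only on a, and consequently Var(p ∑_{i=1}^{⌊a/p⌋} Z_i) = p² ∑ Var(Z_i) → 0 as p → 0+. -/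
open Real Filter MeasureTheory ProbabilityTheory

/-- `couplingZ p i U ω` is the error term
`Z_i = (1/q_i − 1/(ip)) Y_i + (1/q_i)(q_i X_i − Y_i)` with `q_i = 1 − (1−p)^i`,
`Y_i = −log U_i` and `X_i = inf{k ≥ 1 : U_i ≥ (1−q_i)^k}`. -/
noncomputable def couplingZ {Ω : Type*} (p : ℝ) (i : ℕ) (U : ℕ → Ω → ℝ) (ω : Ω) : ℝ :=
  (1 / (1 - (1 - p) ^ i) - 1 / (i * p)) * (-Real.log (U i ω)) +
    (1 / (1 - (1 - p) ^ i)) *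
      ((1 - (1 - p) ^ i) * (sInf {k : ℕ | 1 ≤ k ∧ ((1 - p) ^ i) ^ k ≤ U i ω} : ℕ)
        - (-Real.log (U i ω)))

section SInf
variable {s : ℝ}

lemma setX_nonempty (hs1 : s < 1) {u : ℝ} (hu : 0 < u) (hu1 : u < 1) :
    {k : ℕ | 1 ≤ k ∧ s ^ k ≤ u}.Nonempty := by
  obtain ⟨n, hn⟩ := exists_pow_lt_of_lt_one hu hs1
  refine ⟨n, ?_, hn.le⟩
  rcases Nat.eq_zero_or_pos n with h | h
  · simp [h] at hn; linarith
  · exact h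

lemma measurable_sInfPow (hs0 : 0 < s) (hs1 : s < 1) :
    Measurable fun u : ℝ => (sInf {k : ℕ | 1 ≤ k ∧ s ^ k ≤ u} : ℕ) := by
  apply measurable_to_countable'
  intro n
  match n with
  | 0 =>
    have : (fun u : ℝ => sInf {k : ℕ | 1 ≤ k ∧ s ^ k ≤ u}) ⁻¹' {0} = Set.Iic 0 := by
      ext u
      simp only [Set.mem_preimage, Set.mem_singleton_iff, Set.mem_Iic]
      constructor
      · intro h
        by_contra hu
        push_neg at hu
        rcases le_or_gt 1 u with h1 | h1
        · have hmem : 1 ∈ {k : ℕ | 1 ≤ k ∧ s ^ k ≤ u} := ⟨le_refl 1, by simpa using hs1.le.trans h1⟩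
          have := Nat.sInf_mem (⟨1, hmem⟩ : {k : ℕ | 1 ≤ k ∧ s ^ k ≤ u}.Nonempty)
          rw [h] at this
          exact absurd this.1 (by norm_num)
        · have := Nat.sInf_mem (setX_nonempty hs1 hu h1)
          rw [h] at this
          exact absurd this.1 (by norm_num)
      · intro hu
        have : {k : ℕ | 1 ≤ k ∧ s ^ k ≤ u} = ∅ := by
          ext k
          simp only [Set.mem_setOf_eq, Set.mem_empty_iff_false, iff_false, not_and]
          intro _
          exact not_le.2 (lt_of_le_of_lt hu (pow_pos hs0 k))
        rw [this, Nat.sInf_empty]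
    rw [this]; exact measurableSet_Iic
  | (n+1) =>
    have : (fun u : ℝ => sInf {k : ℕ | 1 ≤ k ∧ s ^ k ≤ u}) ⁻¹' {n+1} =
        Set.Ici (s ^ (n+1)) ∩ ⋂ m ∈ Finset.range (n+1), {u : ℝ | ¬(1 ≤ m ∧ s ^ m ≤ u)} := by
      ext u
      simp only [Set.mem_preimage, Set.mem_singleton_iff, Set.mem_inter_iff, Set.mem_Ici,
        Set.mem_iInter, Finset.mem_range, Set.mem_setOf_eq]
      constructor
      · intro h
        have hne : {k : ℕ | 1 ≤ k ∧ s ^ k ≤ u}.Nonempty := by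
          by_contra hc
          rw [Set.not_nonempty_iff_eq_empty] at hc
          rw [hc, Nat.sInf_empty] at h
          exact Nat.succ_ne_zero n h.symm
        have hmem := Nat.sInf_mem hne
        rw [h] at hmem
        refine ⟨hmem.2, fun m hm => Nat.notMem_of_lt_sInf (h ▸ hm : m < sInf _)⟩
      · rintro ⟨h1, h2⟩
        have hmem : (n+1) ∈ {k : ℕ | 1 ≤ k ∧ s ^ k ≤ u} := ⟨Nat.succ_le_succ (Nat.zero_le n), h1⟩
        refine le_antisymm (Nat.sInf_le hmem) ?_
        by_contra hc
        push_neg at hc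
        exact h2 _ hc (Nat.sInf_mem ⟨_, hmem⟩)
    rw [this]
    exact measurableSet_Ici.inter <| Finset.measurableSet_biInter _ fun m _ => by
      by_cases hm : 1 ≤ m
      · have : {u : ℝ | ¬(1 ≤ m ∧ s ^ m ≤ u)} = Set.Iio (s ^ m) := by
          ext u; simp only [Set.mem_setOf_eq, Set.mem_Iio, not_and, hm, forall_true_left, ← not_le]
        rw [this]; exact measurableSet_Iio
      · have : {u : ℝ | ¬(1 ≤ m ∧ s ^ m ≤ u)} = Set.univ := by
          ext u; simp [hm]
        rw [this]; exact MeasurableSet.univ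
end SInf

lemma aux_D_lb {q r L E X Y : ℝ} (hq0 : 0 < q) (hr0 : 0 < r) (hL0 : 0 < L)
    (hY0 : 0 ≤ Y) (hqr : q + r = 1) (hEr : 1 ≤ E * r) (hqL : q ≤ L)
    (hLr : L * r ≤ q) (hYle : Y ≤ X * L) :
    -(q * (E * Y)) ≤ q * X - Y := by
  have t1 : 0 ≤ r * q * (X * L - Y) :=
    mul_nonneg (mul_nonneg hr0.le hq0.le) (by linarith)
  have t2 : 0 ≤ q * L * Y * (E * r - 1) :=
    mul_nonneg (mul_nonneg (mul_nonneg hq0.le hL0.le) hY0) (by linarith)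
  have t3 : 0 ≤ Y * (q - L * r) := mul_nonneg hY0 (by linarith)
  have t4 : 0 ≤ q * Y * (L - q) := mul_nonneg (mul_nonneg hq0.le hY0) (by linarith)
  have hLr0 : 0 < L * r := mul_pos hL0 hr0
  have key : 0 ≤ (L * r) * (q * X - Y + q * (E * Y)) := by
    have hq1 : q = 1 - r := by linarith
    subst hq1
    nlinarith [t1, t2, t3, t4]
  nlinarith [(mul_nonneg_iff_of_pos_left hLr0).mp key]

set_option maxHeartbeats 1000000 in
lemma couplingZ_abs_le {p : ℝ} {i : ℕ} {a u : ℝ} (hp : 0 < p) (hp2 : p < 1/2)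
    (hi : 1 ≤ i) (hipa : (i : ℝ) * p ≤ a) (hu : u ∈ Set.Ioo (0:ℝ) 1) :
    |(1 / (1 - (1 - p) ^ i) - 1 / (i * p)) * (-Real.log u) +
      (1 / (1 - (1 - p) ^ i)) *
        ((1 - (1 - p) ^ i) * (sInf {k : ℕ | 1 ≤ k ∧ ((1 - p) ^ i) ^ k ≤ u} : ℕ)
          - (-Real.log u))|
      ≤ (1 + Real.exp (2 * a)) * (-Real.log u) + 1 := by
  obtain ⟨hu0, hu1⟩ := hu
  set r : ℝ := (1 - p) ^ i with hr_def
  set q : ℝ := 1 - r with hq_def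
  set X : ℕ := sInf {k : ℕ | 1 ≤ k ∧ r ^ k ≤ u} with hX_def
  set Y : ℝ := -Real.log u with hY_def
  set L : ℝ := -Real.log r with hL_def
  set E : ℝ := Real.exp (2 * a) with hE_def
  have hp1 : p < 1 := by linarith
  have hr0 : 0 < r := pow_pos (by linarith) i
  have hr1 : r < 1 := pow_lt_one₀ (by linarith) (by linarith) (by omega)
  have hq0 : 0 < q := by simp only [hq_def]; linarith
  have hip0 : 0 < (i : ℝ) * p := by
    have : (1:ℝ) ≤ (i:ℝ) := by exact_mod_cast hi
    nlinarith
  -- exp(-2a) ≤ r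
  have hexp_r : Real.exp (-(2 * a)) ≤ r := by
    have step1 : Real.exp (-(2 * p)) ≤ 1 - p := by
      have key : Real.exp (-(2 * p)) * Real.exp (2 * p) = 1 := by
        rw [← Real.exp_add]; simp
      have h1 : 2 * p + 1 ≤ Real.exp (2 * p) := Real.add_one_le_exp _
      have h2 : 0 < Real.exp (-(2 * p)) := Real.exp_pos _
      nlinarith
    calc Real.exp (-(2 * a)) ≤ Real.exp (-(2 * p)) ^ i := by
          rw [← Real.exp_nat_mul]
          apply Real.exp_le_exp.2
          have : (1:ℝ) ≤ (i:ℝ) := by exact_mod_cast hi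
          nlinarith
      _ ≤ r := pow_le_pow_left₀ (Real.exp_pos _).le step1 i
  have hEr : 1 ≤ E * r := by
    have h1 : Real.exp (-(2 * a)) * E = 1 := by rw [hE_def, ← Real.exp_add]; simp
    nlinarith [Real.exp_pos (-(2*a)), hexp_r, hr0]
  have hE1 : 1 ≤ E := by nlinarith
  -- Bernoulli bounds
  have hq_le : q ≤ (i : ℝ) * p := by
    have := one_add_mul_le_pow (a := -p) (by linarith) i
    simp only [hq_def, hr_def]
    have h2 : 1 + (i:ℝ) * (-p) ≤ (1 + (-p)) ^ i := this
    have h3 : (1 + (-p)) ^ i = (1 - p) ^ i := by ring_nf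
    rw [h3] at h2
    linarith
  have hr_mul : r * (1 + (i:ℝ) * p) ≤ 1 := by
    have hber : 1 + (i:ℝ) * p ≤ (1 + p) ^ i := one_add_mul_le_pow (by linarith) i
    have hprod : r * (1 + p) ^ i ≤ 1 := by
      have : r * (1 + p) ^ i = ((1 - p) * (1 + p)) ^ i := by rw [hr_def, ← mul_pow]
      rw [this]
      apply pow_le_one₀ (by nlinarith)
      nlinarith
    nlinarith [pow_pos (show (0:ℝ) < 1 + p by linarith) i]
  have hA_ub : 1 / q - 1 / ((i:ℝ) * p) ≤ 1 := by
    have key : (i:ℝ) * p ≤ (1 + (i:ℝ) * p) * q := by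
      simp only [hq_def]; nlinarith [hr_mul]
    have h1 : 1 / q ≤ (1 + (i:ℝ) * p) / ((i:ℝ) * p) := by
      rw [div_le_div_iff₀ hq0 hip0]; linarith
    have h2 : (1 + (i:ℝ) * p) / ((i:ℝ) * p) = 1 / ((i:ℝ) * p) + 1 := by
      field_simp
    linarith
  have hA_lb : 0 ≤ 1 / q - 1 / ((i:ℝ) * p) := by
    rw [sub_nonneg]
    exact one_div_le_one_div_of_le hq0 hq_le
  -- sInf facts
  have hSmem := Nat.sInf_mem (setX_nonempty hr1 hu0 hu1)
  rw [← hX_def] at hSmem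
  obtain ⟨hX1, hXle⟩ := hSmem
  have hX1R : (1:ℝ) ≤ (X:ℝ) := by exact_mod_cast hX1
  have hXgt : u < r ^ (X - 1) := by
    rcases Nat.eq_or_lt_of_le hX1 with h | h
    · rw [← h]; simpa using hu1
    · have hXm : X - 1 ∉ {k : ℕ | 1 ≤ k ∧ r ^ k ≤ u} :=
        Nat.notMem_of_lt_sInf (by omega)
      simp only [Set.mem_setOf_eq, not_and] at hXm
      exact lt_of_not_ge (hXm (by omega))
  have hL0 : 0 < L := by
    simp only [hL_def, neg_pos]
    exact Real.log_neg hr0 hr1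
  have hYle : Y ≤ (X:ℝ) * L := by
    have h1 : Real.log (r ^ X) ≤ Real.log u := Real.log_le_log (pow_pos hr0 X) hXle
    rw [Real.log_pow] at h1
    simp only [hY_def, hL_def]
    push_cast
    nlinarith
  have hYgt : ((X:ℝ) - 1) * L < Y := by
    have h1 : Real.log u < Real.log (r ^ (X - 1)) := Real.log_lt_log hu0 hXgt
    rw [Real.log_pow] at h1
    have hc : ((X - 1 : ℕ) : ℝ) = (X:ℝ) - 1 := by
      rw [Nat.cast_sub hX1, Nat.cast_one]
    rw [hc] at h1
    simp only [hY_def, hL_def]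
    nlinarith
  have hY0 : 0 ≤ Y := by
    simp only [hY_def]
    have := Real.log_nonpos hu0.le hu1.le
    linarith
  have hqL : q ≤ L := by
    have := Real.log_le_sub_one_of_pos hr0
    simp only [hq_def, hL_def]; linarith
  have hLr : L * r ≤ q := by
    have h := Real.log_le_sub_one_of_pos (inv_pos.2 hr0)
    rw [Real.log_inv] at h
    have : L ≤ r⁻¹ - 1 := by simp only [hL_def]; linarith
    have h2 : L * r ≤ (r⁻¹ - 1) * r := by nlinarith
    have h3 : (r⁻¹ - 1) * r = 1 - r := by field_simp
    simp only [hq_def]; nlinarith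
  -- key bounds on D = q * X - Y
  have hD_ub : q * (X:ℝ) - Y ≤ q := by
    nlinarith [mul_nonneg (by linarith : (0:ℝ) ≤ (X:ℝ) - 1) (by linarith : (0:ℝ) ≤ L - q)]
  have hD_lb : -(q * (E * Y)) ≤ q * (X:ℝ) - Y :=
    aux_D_lb hq0 hr0 hL0 hY0 (by simp [hq_def]) hEr hqL hLr hYle
  -- conclude
  have hT_ub : (1/q) * (q * (X:ℝ) - Y) ≤ 1 := by
    rw [one_div]
    calc q⁻¹ * (q * (X:ℝ) - Y) ≤ q⁻¹ * q := by
          apply mul_le_mul_of_nonneg_left hD_ub (by positivity)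
      _ = 1 := inv_mul_cancel₀ hq0.ne'
  have hT_lb : -(E * Y) ≤ (1/q) * (q * (X:ℝ) - Y) := by
    have h1 : (1/q) * (-(q * (E * Y))) ≤ (1/q) * (q * (X:ℝ) - Y) :=
      mul_le_mul_of_nonneg_left hD_lb (by positivity)
    have h2 : (1/q) * (-(q * (E * Y))) = -(E * Y) := by
      field_simp
    linarith
  rw [abs_le]
  constructor
  · have h1 : (1 / q - 1 / ((i:ℝ) * p)) * Y ≥ 0 := mul_nonneg hA_lb hY0
    have h2 : 0 ≤ E * Y := mul_nonneg (by linarith) hY0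
    nlinarith
  · have h1 : (1 / q - 1 / ((i:ℝ) * p)) * Y ≤ 1 * Y := by
      apply mul_le_mul_of_nonneg_right hA_ub hY0
    have h2 : 0 ≤ E * Y := mul_nonneg (by linarith) hY0
    nlinarith

lemma integrableOn_dom_sq {c : ℝ} (hc : 0 ≤ c) :
    MeasureTheory.IntegrableOn (fun u : ℝ => (c * (-Real.log u) + 1) ^ 2)
      (Set.Icc (0:ℝ) 1) volume := by
  have hIoc : MeasureTheory.IntegrableOn (fun u : ℝ => (c * (-Real.log u) + 1) ^ 2)
      (Set.Ioc (0:ℝ) 1) volume := by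
    have hbase : MeasureTheory.IntegrableOn (fun u : ℝ => (4 * c + 1) ^ 2 * u ^ (-(1/2) : ℝ))
        (Set.Ioc (0:ℝ) 1) volume := by
      have h1 : IntervalIntegrable (fun u : ℝ => u ^ (-(1/2) : ℝ)) volume 0 1 :=
        intervalIntegral.intervalIntegrable_rpow' (by norm_num)
      have h2 := (intervalIntegrable_iff_integrableOn_Ioc_of_le (by norm_num : (0:ℝ) ≤ 1)).1 h1
      exact h2.const_mul _
    apply hbase.mono'
    · apply Measurable.aestronglyMeasurable
      apply Measurable.pow_const
      exact (Real.measurable_log.neg.const_mul c).add_const 1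
    · rw [MeasureTheory.ae_restrict_iff' measurableSet_Ioc]
      apply Filter.Eventually.of_forall
      intro u hu
      obtain ⟨hu0, hu1⟩ := hu
      have hlog : -Real.log u ≤ 4 * u ^ (-(1/4) : ℝ) := by
        have h3 := Real.log_le_sub_one_of_pos (Real.rpow_pos_of_pos hu0 (-(1/4)))
        rw [Real.log_rpow hu0] at h3
        nlinarith [Real.rpow_pos_of_pos hu0 (-(1/4) : ℝ)]
      have hone : (1:ℝ) ≤ u ^ (-(1/4) : ℝ) :=
        Real.one_le_rpow_of_pos_of_le_one_of_nonpos hu0 hu1 (by norm_num)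
      have hg0 : 0 ≤ c * (-Real.log u) + 1 := by
        have : 0 ≤ -Real.log u := by
          have := Real.log_nonpos hu0.le hu1
          linarith
        positivity
      have hgle : c * (-Real.log u) + 1 ≤ (4 * c + 1) * u ^ (-(1/4) : ℝ) := by
        have : c * (-Real.log u) ≤ c * (4 * u ^ (-(1/4) : ℝ)) :=
          mul_le_mul_of_nonneg_left hlog hc
        nlinarith
      have hsq : (u ^ (-(1/4) : ℝ)) ^ 2 = u ^ (-(1/2) : ℝ) := by
        rw [← Real.rpow_natCast (u ^ (-(1/4):ℝ)) 2, ← Real.rpow_mul hu0.le]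
        norm_num
      rw [Real.norm_eq_abs, abs_of_nonneg (sq_nonneg _)]
      calc (c * (-Real.log u) + 1) ^ 2 ≤ ((4 * c + 1) * u ^ (-(1/4) : ℝ)) ^ 2 := by
            apply sq_le_sq' (by nlinarith) hgle
        _ = (4 * c + 1) ^ 2 * u ^ (-(1/2) : ℝ) := by rw [mul_pow, hsq]
  have : volume.restrict (Set.Icc (0:ℝ) 1) = volume.restrict (Set.Ioc (0:ℝ) 1) :=
    (Measure.restrict_congr_set MeasureTheory.Ioc_ae_eq_Icc).symm
  unfold MeasureTheory.IntegrableOn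
  rw [this]
  exact hIoc


set_option maxHeartbeats 1000000 in
/-- The variances of the error terms `Z_i`, `1 ≤ i ≤ ⌊a/p⌋`, are bounded by a constant
depending only on `a`; consequently
`Var(p ∑_{i=1}^{⌊a/p⌋} Z_i) = p² ∑_{i=1}^{⌊a/p⌋} Var(Z_i) → 0` as `p → 0+`. -/
theorem variance_rest_term_vanishes
    {Ω : Type*} [MeasurableSpace Ω] (μ : Measure Ω) [IsProbabilityMeasure μ]
    (a : ℝ) (ha : 0 < a) (U : ℕ → Ω → ℝ)
    (h_meas : ∀ i, Measurable (U i))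
    (h_indep : iIndepFun U μ)
    (h_unif : ∀ i, Measure.map (U i) μ = volume.restrict (Set.Icc 0 1)) :
    (∃ C > (0:ℝ), ∀ p ∈ Set.Ioo (0:ℝ) (1/2), ∀ i ∈ Finset.Icc 1 (Nat.floor (a / p)),
        variance (couplingZ p i U) μ ≤ C) ∧
    (∀ p ∈ Set.Ioo (0:ℝ) (1/2),
        variance (fun ω => p * ∑ i ∈ Finset.Icc 1 (Nat.floor (a / p)), couplingZ p i U ω) μ
          = p ^ 2 * ∑ i ∈ Finset.Icc 1 (Nat.floor (a / p)), variance (couplingZ p i U) μ) ∧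
    Tendsto (fun p : ℝ =>
        p ^ 2 * ∑ i ∈ Finset.Icc 1 (Nat.floor (a / p)), variance (couplingZ p i U) μ)
      (nhdsWithin 0 (Set.Ioo 0 (1/2))) (nhds 0) := by
  have hc0 : (0:ℝ) ≤ 1 + Real.exp (2 * a) := by positivity
  set c : ℝ := 1 + Real.exp (2 * a) with hc_def
  set g : ℝ → ℝ := fun u => c * (-Real.log u) + 1 with hg_def
  have hg_meas : Measurable g := (Real.measurable_log.neg.const_mul c).add_const 1
  set C₀ : ℝ := ∫ u in Set.Icc (0:ℝ) 1, (g u) ^ 2 with hC0_def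
  have hC0_nonneg : 0 ≤ C₀ := integral_nonneg fun u => sq_nonneg _
  -- measurability of the one-dimensional factor
  have hfZmeas : ∀ (p : ℝ), 0 < p → p < 1 → ∀ i : ℕ, 1 ≤ i →
      Measurable (fun u : ℝ => (1 / (1 - (1 - p) ^ i) - 1 / (i * p)) * (-Real.log u) +
        (1 / (1 - (1 - p) ^ i)) *
          ((1 - (1 - p) ^ i) * (sInf {k : ℕ | 1 ≤ k ∧ ((1 - p) ^ i) ^ k ≤ u} : ℕ)
            - (-Real.log u))) := by
    intro p hp hp1 i hi1
    have hr0 : (0:ℝ) < (1 - p) ^ i := pow_pos (by linarith) i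
    have hr1 : (1 - p) ^ i < 1 := pow_lt_one₀ (by linarith) (by linarith) (by omega)
    apply Measurable.add
    · exact (Real.measurable_log.neg).const_mul _
    · apply Measurable.const_mul
      apply Measurable.sub
      · exact (measurable_from_nat.comp (measurable_sInfPow hr0 hr1)).const_mul _
      · exact Real.measurable_log.neg
  -- main per-(p,i) facts
  have hmain : ∀ p ∈ Set.Ioo (0:ℝ) (1/2), ∀ i ∈ Finset.Icc 1 (Nat.floor (a / p)),
      MemLp (couplingZ p i U) 2 μ ∧ variance (couplingZ p i U) μ ≤ C₀ + 1 := by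
    rintro p ⟨hp, hp2⟩ i hi
    rw [Finset.mem_Icc] at hi
    obtain ⟨hi1, hi2⟩ := hi
    have hipa : (i:ℝ) * p ≤ a := by
      have h1 : (i:ℝ) ≤ a / p := le_trans (Nat.cast_le.2 hi2) (Nat.floor_le (by positivity))
      have h2 : (i:ℝ) * p ≤ (a / p) * p := by nlinarith
      have h3 : (a / p) * p = a := by field_simp
      linarith
    have hp1 : p < 1 := by linarith
    have hfm := hfZmeas p hp hp1 i hi1
    have hae : ∀ᵐ ω ∂μ, U i ω ∈ Set.Ioo (0:ℝ) 1 := by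
      rw [ae_iff]
      have hpre : {ω | ¬ U i ω ∈ Set.Ioo (0:ℝ) 1} = U i ⁻¹' (Set.Ioo (0:ℝ) 1)ᶜ := rfl
      rw [hpre, ← Measure.map_apply (h_meas i) measurableSet_Ioo.compl, h_unif i,
        Measure.restrict_apply measurableSet_Ioo.compl]
      apply measure_mono_null (t := {(0:ℝ), 1})
      · rintro u ⟨hcompl, h0, h1⟩
        simp only [Set.mem_compl_iff, Set.mem_Ioo, not_and, not_lt] at hcompl
        rcases eq_or_lt_of_le h0 with h | h
        · exact Or.inl h.symm
        · exact Or.inr (le_antisymm h1 (hcompl h))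
      · exact Set.Finite.measure_zero (Set.toFinite _) _
    have habs : ∀ᵐ ω ∂μ, |couplingZ p i U ω| ≤ g (U i ω) := by
      filter_upwards [hae] with ω hω
      exact couplingZ_abs_le hp hp2 hi1 hipa hω
    have hgU : MemLp (fun ω => g (U i ω)) 2 μ := by
      have h1 : MemLp g 2 (Measure.map (U i) μ) := by
        rw [h_unif i]
        exact (memLp_two_iff_integrable_sq hg_meas.aestronglyMeasurable).2
          (integrableOn_dom_sq hc0)
      exact (memLp_map_measure_iff hg_meas.aestronglyMeasurable (h_meas i).aemeasurable).1 h1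
    have hZmem : MemLp (couplingZ p i U) 2 μ := by
      apply hgU.of_le ((hfm.comp (h_meas i)).aestronglyMeasurable)
      filter_upwards [habs] with ω h1
      rw [Real.norm_eq_abs, Real.norm_eq_abs]
      exact h1.trans (le_abs_self _)
    refine ⟨hZmem, ?_⟩
    have hv1 : variance (couplingZ p i U) μ ≤ μ[(couplingZ p i U) ^ 2] :=
      variance_le_expectation_sq hZmem.aestronglyMeasurable
    have hv3 : μ[(couplingZ p i U) ^ 2] ≤ ∫ ω, g (U i ω) ^ 2 ∂μ := by
      have h0 : μ[(couplingZ p i U) ^ 2] = ∫ ω, couplingZ p i U ω ^ 2 ∂μ := rfl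
      rw [h0]
      apply integral_mono_ae hZmem.integrable_sq hgU.integrable_sq
      filter_upwards [habs] with ω h1
      have h2 := abs_le.1 h1
      exact sq_le_sq' (by linarith [h2.1]) h2.2
    have hv4 : ∫ ω, g (U i ω) ^ 2 ∂μ = C₀ := by
      have h1 : ∫ u, g u ^ 2 ∂(Measure.map (U i) μ) = ∫ ω, g (U i ω) ^ 2 ∂μ :=
        integral_map (h_meas i).aemeasurable
          ((hg_meas.pow_const 2).aestronglyMeasurable)
      rw [h_unif i] at h1
      rw [← h1, hC0_def]
    linarith
  have hCpos : (0:ℝ) < C₀ + 1 := by linarith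
  refine ⟨⟨C₀ + 1, hCpos, fun p hp i hi => (hmain p hp i hi).2⟩, ?_, ?_⟩
  · -- variance additivity
    rintro p hp
    obtain ⟨hp0, hp2⟩ := hp
    have hp1 : p < 1 := by linarith
    have hpairs : Set.Pairwise ↑(Finset.Icc 1 (Nat.floor (a / p)))
        (fun i j => IndepFun (couplingZ p i U) (couplingZ p j U) μ) := by
      intro i hi j hj hij
      simp only [Finset.coe_Icc, Set.mem_Icc] at hi hj
      exact (h_indep.indepFun hij).comp (hfZmeas p hp0 hp1 i hi.1) (hfZmeas p hp0 hp1 j hj.1)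
    have hmem : ∀ i ∈ Finset.Icc 1 (Nat.floor (a / p)), MemLp (couplingZ p i U) 2 μ :=
      fun i hi => (hmain p ⟨hp0, hp2⟩ i hi).1
    have hfe : (fun ω => p * ∑ i ∈ Finset.Icc 1 (Nat.floor (a / p)), couplingZ p i U ω)
        = fun ω => p * (∑ i ∈ Finset.Icc 1 (Nat.floor (a / p)), couplingZ p i U) ω := by
      funext ω
      simp [Finset.sum_apply]
    rw [hfe, variance_const_mul, IndepFun.variance_sum hmem hpairs]
  · -- tendsto 0
    apply squeeze_zero' (g := fun p : ℝ => a * (C₀ + 1) * p)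
    · filter_upwards [eventually_mem_nhdsWithin] with p hp
      exact mul_nonneg (sq_nonneg p)
        (Finset.sum_nonneg fun i _ => variance_nonneg _ _)
    · filter_upwards [eventually_mem_nhdsWithin] with p hp
      obtain ⟨hp0, hp2⟩ := hp
      have hsum : ∑ i ∈ Finset.Icc 1 (Nat.floor (a / p)), variance (couplingZ p i U) μ
          ≤ (Nat.floor (a / p) : ℝ) * (C₀ + 1) := by
        have h1 := Finset.sum_le_card_nsmul (Finset.Icc 1 (Nat.floor (a / p)))
          (fun i => variance (couplingZ p i U) μ) (C₀ + 1)
          (fun i hi => (hmain p ⟨hp0, hp2⟩ i hi).2)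
        rw [nsmul_eq_mul] at h1
        have h2 : ((Finset.Icc 1 (Nat.floor (a / p))).card : ℝ) = (Nat.floor (a / p) : ℝ) := by
          rw [Nat.card_Icc]
          push_cast [Nat.add_sub_cancel]
          ring
        rw [h2] at h1
        exact h1
      have hfl : (Nat.floor (a / p) : ℝ) ≤ a / p := Nat.floor_le (by positivity)
      calc p ^ 2 * ∑ i ∈ Finset.Icc 1 (Nat.floor (a / p)), variance (couplingZ p i U) μ
          ≤ p ^ 2 * ((Nat.floor (a / p) : ℝ) * (C₀ + 1)) :=
            mul_le_mul_of_nonneg_left hsum (sq_nonneg p)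
        _ ≤ p ^ 2 * ((a / p) * (C₀ + 1)) := by
            apply mul_le_mul_of_nonneg_left
              (mul_le_mul_of_nonneg_right hfl (by linarith)) (sq_nonneg p)
        _ = a * (C₀ + 1) * p := by
            field_simp
    · apply tendsto_nhdsWithin_of_tendsto_nhds
      have h1 : Tendsto (fun p : ℝ => a * (C₀ + 1) * p) (nhds 0) (nhds (a * (C₀ + 1) * 0)) :=
        (continuous_const.mul continuous_id).tendsto 0
      simpa using h1
end
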